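/- arXiv:1604.02215 — 9 statements merged into one kernel-verified Lean document; each statement's English description precedes it below -/
import Mathlib

section
/- Let F be a free Borel flow on a standard Borel space X and let λ > 0. The flow F admits a {λ}-regular cross section (i.e. a cross section all of whose gaps equal λ) if and only if there exists a Borel function f : X → ℂ \ {0} such that f(x + r) = e^{2πir/λ} · f(x) for all x ∈ X and all r ∈ ℝ. -/
/-- A Borel flow: a Borel measurable action of `(ℝ, +)` on `X`. -/
structure BorelFlow (X : Type*) [MeasurableSpace X] where
  act : X → ℝ → X
  measurable : Measurable (Function.uncurry act)
  act_zero : ∀ x, act x 0 = x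
  act_add : ∀ x r s, act (act x r) s = act x (r + s)

namespace BorelFlow

variable {X : Type*} [MeasurableSpace X] (F : BorelFlow X)

/-- The flow is free if `x + r = x` implies `r = 0`. -/
def Free : Prop := ∀ x r, F.act x r = x → r = 0

/-- A cross section for the flow restricted to an invariant set `A`: a Borel subset
of `A` meeting every orbit in `A`, lacunary, and bi-infinite on every orbit. -/
def IsCrossSectionOn (A C : Set X) : Prop :=
  MeasurableSet C ∧ C ⊆ A ∧
  (∀ x ∈ A, ∃ r : ℝ, F.act x r ∈ C) ∧
  (∃ c > 0, ∀ x ∈ C, ∀ r > 0, F.act x r ∈ C → c ≤ r) ∧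
  (∀ x ∈ C, ¬ BddAbove {r : ℝ | F.act x r ∈ C} ∧ ¬ BddBelow {r : ℝ | F.act x r ∈ C})

/-- A cross section for the flow on the whole space. -/
def IsCrossSection (C : Set X) : Prop := F.IsCrossSectionOn Set.univ C

/-- The gap of `x ∈ C`: the least `r > 0` with `x + r ∈ C`. -/
noncomputable def gap (C : Set X) (x : X) : ℝ :=
  sInf {r : ℝ | 0 < r ∧ F.act x r ∈ C}

/-- The induced automorphism `φ_C` sending a point of `C` to the next one. -/
noncomputable def nextPoint (C : Set X) (x : X) : X := F.act x (F.gap C x)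

/-- The gap to the previous point of the cross section. -/
noncomputable def prevGap (C : Set X) (x : X) : ℝ :=
  sInf {r : ℝ | 0 < r ∧ F.act x (-r) ∈ C}

/-- The inverse of the induced automorphism: the previous point of the cross section. -/
noncomputable def prevPoint (C : Set X) (x : X) : X := F.act x (-(F.prevGap C x))

/-- `C` is an `S`-regular cross section on `A`: all gaps belong to `S`. -/
def SRegularOn (A C : Set X) (S : Set ℝ) : Prop :=
  F.IsCrossSectionOn A C ∧ ∀ x ∈ C, F.gap C x ∈ S

/-- `C` is an `S`-regular cross section: all gaps belong to `S`. -/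
def SRegular (C : Set X) (S : Set ℝ) : Prop := F.SRegularOn Set.univ C S

/-- A cross section on `A` with gaps unbounded in both directions along every orbit. -/
def SparseSectionOn (A C : Set X) : Prop :=
  F.IsCrossSectionOn A C ∧ ∀ x ∈ C, ∀ K > 0,
    (∃ n : ℕ, 0 < n ∧ K < F.gap C ((F.nextPoint C)^[n] x)) ∧
    (∃ m : ℕ, 0 < m ∧ K < F.gap C ((F.prevPoint C)^[m] x))

/-- The flow restricted to `A` is sparse. -/
def SparseOn (A : Set X) : Prop := ∃ C, F.SparseSectionOn A C

/-- The flow is sparse. -/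
def Sparse : Prop := F.SparseOn Set.univ

/-- A flow-invariant set. -/
def Invariant (A : Set X) : Prop := ∀ x ∈ A, ∀ r : ℝ, F.act x r ∈ A

end BorelFlow

/-!
A `{λ}`-regular cross section is the same as a Borel set `C` meeting every orbit such that the
return times `{r | x + r ∈ C}` of every `x ∈ C` are exactly `λℤ`. Given such `C`, every point is
uniquely `c + t` with `c ∈ C`, `t ∈ [0, λ)`, and `f (c + t) = e^{2πit/λ}` is the eigenfunction;
it is Borel because `(c, t) ↦ c + t` is a Borel bijection `C × [0, λ) → X` (Lusin–Souslin).
Conversely, the set where `f` is a positive real works, since `f (x + r) / f x = e^{2πir/λ}` is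
a positive real exactly when `r ∈ λℤ`.
-/

open Set AddSubgroup

noncomputable def periodicExp (lam r : ℝ) : ℂ := Complex.exp (2 * Real.pi * Complex.I * r / lam)

section periodicExp

variable {lam : ℝ}

lemma periodicExp_add (a b : ℝ) :
    periodicExp lam (a + b) = periodicExp lam a * periodicExp lam b := by
  rw [periodicExp, periodicExp, periodicExp, ← Complex.exp_add]
  push_cast
  ring_nf

lemma norm_periodicExp (r : ℝ) : ‖periodicExp lam r‖ = 1 := by
  rw [periodicExp, show 2 * Real.pi * Complex.I * r / lam =
    ((2 * Real.pi * r / lam : ℝ) : ℂ) * Complex.I by push_cast; ring]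
  exact Complex.norm_exp_ofReal_mul_I _

lemma measurable_periodicExp : Measurable (periodicExp lam) := by
  unfold periodicExp
  fun_prop

lemma periodicExp_eq_one_iff (hlam : lam ≠ 0) {r : ℝ} :
    periodicExp lam r = 1 ↔ r ∈ zmultiples lam := by
  have hlamC : (lam : ℂ) ≠ 0 := Complex.ofReal_ne_zero.2 hlam
  rw [periodicExp, Complex.exp_eq_one_iff, mem_zmultiples_iff]
  refine exists_congr fun k => ?_
  rw [zsmul_eq_mul, eq_comm, ← Complex.ofReal_inj]
  push_cast
  constructor <;> intro h
  · field_simp at h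
    linear_combination h
  · rw [eq_div_iff hlamC]
    linear_combination 2 * Real.pi * Complex.I * h

lemma exists_periodicExp_mul_eq_norm (hlam : lam ≠ 0) (z : ℂ) :
    ∃ r, periodicExp lam r * z = ‖z‖ := by
  have hlamC : (lam : ℂ) ≠ 0 := Complex.ofReal_ne_zero.2 hlam
  have hangle : periodicExp lam (-(z.arg * lam / (2 * Real.pi))) =
      Complex.exp (-(z.arg * Complex.I)) := by
    rw [periodicExp]
    congr 1
    push_cast
    field_simp
  refine ⟨-(z.arg * lam / (2 * Real.pi)), ?_⟩
  calc _ = Complex.exp (-(z.arg * Complex.I)) * (‖z‖ * Complex.exp (z.arg * Complex.I)) := by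
        rw [hangle, Complex.norm_mul_exp_arg_mul_I]
    _ = ‖z‖ := by
      rw [mul_left_comm, ← Complex.exp_add, neg_add_cancel, Complex.exp_zero, mul_one]

end periodicExp

section zmultiples

variable {lam : ℝ}

lemma le_of_pos_of_mem_zmultiples (hlam : 0 < lam) {r : ℝ} (hr : 0 < r)
    (h : r ∈ zmultiples lam) : lam ≤ r := by
  obtain ⟨k, rfl⟩ := mem_zmultiples_iff.1 h
  rw [zsmul_eq_mul] at hr ⊢
  have hk : 0 < k := by exact_mod_cast pos_of_mul_pos_left hr hlam.le
  exact le_mul_of_one_le_left hlam.le (by exact_mod_cast hk)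

lemma not_bddAbove_zmultiples (hlam : 0 < lam) : ¬BddAbove (zmultiples lam : Set ℝ) := by
  rintro ⟨b, hb⟩
  obtain ⟨n, hn⟩ := Archimedean.arch (b + lam) hlam
  linarith [hb (nsmul_mem (mem_zmultiples lam) n)]

lemma not_bddBelow_zmultiples (hlam : 0 < lam) : ¬BddBelow (zmultiples lam : Set ℝ) := by
  rintro ⟨b, hb⟩
  obtain ⟨n, hn⟩ := Archimedean.arch (lam - b) hlam
  linarith [hb (neg_mem (nsmul_mem (mem_zmultiples lam) n))]

lemma eq_of_sub_mem_zmultiples_of_mem_Ico (hlam : 0 < lam) {t t' : ℝ} (ht : t ∈ Ico 0 lam)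
    (ht' : t' ∈ Ico 0 lam) (h : t - t' ∈ zmultiples lam) : t = t' := by
  rw [← zero_add lam, ← toIcoMod_eq_self hlam] at ht ht'
  obtain ⟨k, hk⟩ := mem_zmultiples_iff.1 h
  rw [← ht, ← ht', toIcoMod_eq_toIcoMod]
  exact ⟨-k, by rw [neg_zsmul, hk, neg_sub]⟩

end zmultiples

lemma csInf_mem_of_add_le {S : Set ℝ} {c : ℝ} (hc : 0 < c) (hne : S.Nonempty)
    (hbdd : BddBelow S) (hsep : ∀ a ∈ S, ∀ b ∈ S, a < b → a + c ≤ b) : sInf S ∈ S := by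
  obtain ⟨b, hb, hbc⟩ := exists_lt_of_csInf_lt hne (lt_add_of_pos_right (sInf S) hc)
  obtain h | h := (csInf_le hbdd hb).eq_or_lt
  · rwa [h]
  · obtain ⟨a, ha, hab⟩ := exists_lt_of_csInf_lt hne h
    linarith [hsep a ha b hb hab, csInf_le hbdd ha]

lemma measurable_of_eqOn_comp_of_injOn {α X Y : Type*} [MeasurableSpace α] [StandardBorelSpace α]
    [MeasurableSpace X] [MeasurableSpace.CountablySeparated X] [MeasurableSpace Y]
    {Φ : α → X} {s : Set α} {g : α → Y} {h : X → Y} (hs : MeasurableSet s)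
    (hΦ : Measurable Φ) (hinj : InjOn Φ s) (hsurj : SurjOn Φ s univ) (hg : Measurable g)
    (hgh : EqOn (h ∘ Φ) g s) :
    Measurable h := by
  intro U hU
  convert (hs.inter (hg hU)).image_of_measurable_injOn hΦ (hinj.mono inter_subset_left)
  ext x
  constructor
  · intro hx
    obtain ⟨a, ha, rfl⟩ := hsurj (mem_univ x)
    exact ⟨a, ⟨ha, by rw [mem_preimage, ← hgh ha]; exact hx⟩, rfl⟩
  · rintro ⟨a, ⟨ha, hga⟩, rfl⟩
    rw [mem_preimage, ← Function.comp_apply (f := h), hgh ha]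
    exact hga

namespace BorelFlow

variable {X : Type*} [MeasurableSpace X] (F : BorelFlow X) {C : Set X} {lam c : ℝ}

def returnTimes (C : Set X) (x : X) : Set ℝ := {r | F.act x r ∈ C}

@[simp]
lemma mem_returnTimes {x : X} {r : ℝ} : r ∈ F.returnTimes C x ↔ F.act x r ∈ C := Iff.rfl

lemma act_act_neg (x : X) (r : ℝ) : F.act (F.act x r) (-r) = x := by
  rw [F.act_add, add_neg_cancel, F.act_zero]

lemma act_act_sub (x : X) (r s : ℝ) : F.act (F.act x r) (s - r) = F.act x s := by
  rw [F.act_add, add_sub_cancel]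

lemma add_le_of_mem_returnTimes (hlac : ∀ x ∈ C, ∀ r > 0, F.act x r ∈ C → c ≤ r) {y : X}
    {a b : ℝ} (ha : a ∈ F.returnTimes C y) (hb : b ∈ F.returnTimes C y) (hab : a < b) :
    a + c ≤ b := by
  have := hlac _ ha (b - a) (sub_pos.2 hab) (by rwa [act_act_sub])
  linarith

lemma isLeast_gap (hlac : ∀ x ∈ C, ∀ r > 0, F.act x r ∈ C → c ≤ r) (hc : 0 < c) {y : X}
    (habove : ¬BddAbove (F.returnTimes C y)) : IsLeast {r | 0 < r ∧ F.act y r ∈ C} (F.gap C y) := by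
  have hbdd : BddBelow {r | 0 < r ∧ F.act y r ∈ C} := ⟨0, fun r hr => hr.1.le⟩
  refine ⟨csInf_mem_of_add_le hc ?_ hbdd ?_, fun r hr => csInf_le hbdd hr⟩
  · obtain ⟨r, hr, hr0⟩ := not_bddAbove_iff.1 habove 0
    exact ⟨r, hr0, hr⟩
  · exact fun a ha b hb hab => F.add_le_of_mem_returnTimes hlac ha.2 hb.2 hab

lemma act_neg_mem (hlac : ∀ x ∈ C, ∀ r > 0, F.act x r ∈ C → c ≤ r) (hc : 0 < c)
    (hlam : 0 < lam) (hfwd : ∀ y ∈ C, F.act y lam ∈ C)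
    (hgap : ∀ y ∈ C, ∀ t, 0 < t → F.act y t ∈ C → lam ≤ t) {y : X} (hy : y ∈ C)
    (hbelow : ¬BddBelow (F.returnTimes C y)) : F.act y (-lam) ∈ C := by
  set S := {r | 0 < r ∧ F.act y (-r) ∈ C}
  have hbdd : BddBelow S := ⟨0, fun r hr => hr.1.le⟩
  have hm : sInf S ∈ S := by
    refine csInf_mem_of_add_le hc ?_ hbdd ?_
    · obtain ⟨r, hr, hr0⟩ := not_bddBelow_iff.1 hbelow 0
      exact ⟨-r, neg_pos.2 hr0, by rwa [neg_neg]⟩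
    · intro a ha b hb hab
      linarith [F.add_le_of_mem_returnTimes hlac hb.2 ha.2 (neg_lt_neg hab)]
  -- `y - m` is the last point of `C` before `y`; its successor `y - m + λ` cannot lie strictly before `y`.
  set m := sInf S
  have hlm : lam ≤ m :=
    hgap _ hm.2 m hm.1 (by rw [F.act_add, neg_add_cancel, F.act_zero]; exact hy)
  obtain h | h := hlm.eq_or_lt
  · exact h ▸ hm.2
  · have hS : m - lam ∈ S := ⟨sub_pos.2 h, by
      rw [← F.act_act_sub y (-m), show -(m - lam) - -m = lam by ring]; exact hfwd _ hm.2⟩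
    linarith [csInf_le hbdd hS]

lemma returnTimes_eq_zmultiples (hlam : 0 < lam) (hfwd : ∀ y ∈ C, F.act y lam ∈ C)
    (hbwd : ∀ y ∈ C, F.act y (-lam) ∈ C)
    (hgap : ∀ y ∈ C, ∀ t, 0 < t → F.act y t ∈ C → lam ≤ t)
    {x : X} (hx : x ∈ C) : F.returnTimes C x = zmultiples lam := by
  have hzsmul : ∀ k : ℤ, F.act x (k • lam) ∈ C := by
    intro k
    induction k using Int.induction_on with
    | zero => rwa [zero_zsmul, F.act_zero]
    | succ k ih => rw [add_zsmul, one_zsmul, ← F.act_add]; exact hfwd _ ih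
    | pred k ih => rw [sub_zsmul, one_zsmul, ← F.act_add]; exact hbwd _ ih
  ext r
  refine ⟨fun hr => ?_, fun hr => ?_⟩
  · have hdecomp := toIcoMod_add_toIcoDiv_zsmul hlam 0 r
    set t := toIcoMod hlam 0 r
    set k := toIcoDiv hlam 0 r
    have ht := toIcoMod_mem_Ico hlam 0 r
    rw [zero_add] at ht
    have htC : F.act (F.act x (k • lam)) t ∈ C := by rwa [F.act_add, add_comm, hdecomp]
    have ht0 : t = 0 := by
      by_contra h
      linarith [hgap _ (hzsmul k) t (lt_of_le_of_ne ht.1 (Ne.symm h)) htC, ht.2]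
    rw [ht0, zero_add] at hdecomp
    exact mem_zmultiples_iff.2 ⟨k, hdecomp⟩
  · obtain ⟨k, rfl⟩ := mem_zmultiples_iff.1 hr
    exact hzsmul k

theorem sRegular_singleton_iff (hlam : 0 < lam) :
    F.SRegular C {lam} ↔ MeasurableSet C ∧ (∀ x, ∃ r, F.act x r ∈ C) ∧
      ∀ x ∈ C, F.returnTimes C x = zmultiples lam := by
  constructor
  · rintro ⟨⟨hmeas, -, hmeet, ⟨c, hc, hlac⟩, hbi⟩, hgapC⟩
    have hleast : ∀ y ∈ C, IsLeast {r | 0 < r ∧ F.act y r ∈ C} lam := fun y hy =>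
      mem_singleton_iff.1 (hgapC y hy) ▸ F.isLeast_gap hlac hc (hbi y hy).1
    have hfwd : ∀ y ∈ C, F.act y lam ∈ C := fun y hy => (hleast y hy).1.2
    have hgap : ∀ y ∈ C, ∀ t, 0 < t → F.act y t ∈ C → lam ≤ t := fun y hy t ht htC =>
      (hleast y hy).2 ⟨ht, htC⟩
    have hbwd : ∀ y ∈ C, F.act y (-lam) ∈ C := fun y hy =>
      F.act_neg_mem hlac hc hlam hfwd hgap hy (hbi y hy).2
    exact ⟨hmeas, fun x => hmeet x trivial,
      fun x hx => F.returnTimes_eq_zmultiples hlam hfwd hbwd hgap hx⟩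
  · rintro ⟨hmeas, hmeet, hret⟩
    have hgap : ∀ x ∈ C, ∀ r > 0, F.act x r ∈ C → lam ≤ r := fun x hx r hr hrC =>
      le_of_pos_of_mem_zmultiples hlam hr (by rw [← SetLike.mem_coe, ← hret x hx]; exact hrC)
    refine ⟨⟨hmeas, subset_univ C, fun x _ => hmeet x, ⟨lam, hlam, hgap⟩, fun x hx => ?_⟩,
      fun x hx => ?_⟩
    · change ¬BddAbove (F.returnTimes C x) ∧ ¬BddBelow (F.returnTimes C x)
      rw [hret x hx]
      exact ⟨not_bddAbove_zmultiples hlam, not_bddBelow_zmultiples hlam⟩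
    · have hlamC : F.act x lam ∈ C := (F.mem_returnTimes).1 (hret x hx ▸ mem_zmultiples lam)
      exact mem_singleton_iff.2
        (IsLeast.csInf_eq ⟨⟨hlam, hlamC⟩, fun r hr => hgap x hx r hr.1 hr.2⟩)

lemma injOn_uncurry_act (hlam : 0 < lam) (hret : ∀ x ∈ C, F.returnTimes C x = zmultiples lam) :
    InjOn (Function.uncurry F.act) (C ×ˢ Ico 0 lam) := by
  rintro ⟨y, t⟩ ⟨hy, ht⟩ ⟨y', t'⟩ ⟨hy', ht'⟩ (he : F.act y t = F.act y' t')
  have hy'eq : F.act y (t - t') = y' := by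
    rw [← F.act_act_sub y t, he, sub_sub_cancel_left, F.act_act_neg]
  have htt' : t = t' := eq_of_sub_mem_zmultiples_of_mem_Ico hlam ht ht' (by
    rw [← SetLike.mem_coe, ← hret y hy, mem_returnTimes, hy'eq]; exact hy')
  subst htt'
  rw [sub_self, F.act_zero] at hy'eq
  rw [hy'eq]

lemma surjOn_uncurry_act (hlam : 0 < lam) (hmeet : ∀ x, ∃ r, F.act x r ∈ C)
    (hret : ∀ x ∈ C, F.returnTimes C x = zmultiples lam) :
    SurjOn (Function.uncurry F.act) (C ×ˢ Ico 0 lam) univ := by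
  intro x _
  obtain ⟨r, hr⟩ := hmeet x
  have hdecomp := toIcoMod_add_toIcoDiv_zsmul hlam 0 (-r)
  have ht := toIcoMod_mem_Ico hlam 0 (-r)
  rw [zero_add] at ht
  have hy : F.act (F.act x r) (toIcoDiv hlam 0 (-r) • lam) ∈ C := by
    rw [← mem_returnTimes, hret _ hr]
    exact zsmul_mem (mem_zmultiples lam) _
  refine ⟨(_, toIcoMod hlam 0 (-r)), ⟨hy, ht⟩, ?_⟩
  simp only [Function.uncurry_apply_pair, F.act_add]
  rw [add_assoc, add_comm (_ • lam), hdecomp, add_neg_cancel, F.act_zero]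

lemma exists_eigenfunction_of_returnTimes_eq [StandardBorelSpace X] (hlam : 0 < lam)
    (hC : MeasurableSet C) (hmeet : ∀ x, ∃ r, F.act x r ∈ C)
    (hret : ∀ x ∈ C, F.returnTimes C x = zmultiples lam) :
    ∃ f : X → ℂ, Measurable f ∧ (∀ x, f x ≠ 0) ∧
      ∀ x r, f (F.act x r) = periodicExp lam r * f x := by
  choose τ hτ using hmeet
  set f := fun x => periodicExp lam (-τ x)
  have hf : ∀ y ∈ C, ∀ t, f (F.act y t) = periodicExp lam t := by
    intro y hy t
    have hperiod : t + τ (F.act y t) ∈ zmultiples lam := by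
      rw [← SetLike.mem_coe, ← hret y hy, mem_returnTimes, ← F.act_add]
      exact hτ _
    calc f (F.act y t)
        = periodicExp lam (t + τ (F.act y t)) * periodicExp lam (-τ (F.act y t)) := by
          rw [(periodicExp_eq_one_iff hlam.ne').2 hperiod, one_mul]
      _ = periodicExp lam t := by rw [← periodicExp_add, add_neg_cancel_right]
  refine ⟨f, ?_, fun x => ?_, fun x r => ?_⟩
  · exact measurable_of_eqOn_comp_of_injOn (hC.prod measurableSet_Ico) F.measurable
      (F.injOn_uncurry_act hlam hret) (F.surjOn_uncurry_act hlam (fun x => ⟨τ x, hτ x⟩) hret)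
      (measurable_periodicExp.comp measurable_snd) fun p hp => hf p.1 hp.1 p.2
  · exact norm_ne_zero_iff.1 (by rw [norm_periodicExp]; exact one_ne_zero)
  · rw [← F.act_act_sub x (τ x) r, hf _ (hτ x), sub_eq_add_neg, periodicExp_add]

lemma sRegular_of_eigenfunction (hlam : 0 < lam) {f : X → ℂ} (hfm : Measurable f)
    (hf0 : ∀ x, f x ≠ 0) (hfe : ∀ x r, f (F.act x r) = periodicExp lam r * f x) :
    F.SRegular {x | f x = ‖f x‖} {lam} := by
  refine (F.sRegular_singleton_iff hlam).2
    ⟨measurableSet_eq_fun hfm (Complex.measurable_ofReal.comp hfm.norm), fun x => ?_,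
      fun x hx => ?_⟩
  · obtain ⟨r, hr⟩ := exists_periodicExp_mul_eq_norm hlam.ne' (f x)
    refine ⟨r, ?_⟩
    rw [mem_ofPred_eq, hfe, hr, Complex.norm_real, norm_norm]
  · have hx : f x = ‖f x‖ := hx
    ext r
    rw [mem_returnTimes, mem_ofPred_eq, hfe, norm_mul, norm_periodicExp, one_mul, ← hx,
      mul_eq_right₀ (hf0 x), periodicExp_eq_one_iff hlam.ne', SetLike.mem_coe]

end BorelFlow

theorem ambrose_criterion_general {X : Type*} [MeasurableSpace X] [StandardBorelSpace X]
    (F : BorelFlow X) (lam : ℝ) (hlam : 0 < lam) :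
    (∃ C : Set X, F.SRegular C {lam}) ↔
      (∃ f : X → ℂ, Measurable f ∧ (∀ x, f x ≠ 0) ∧
        ∀ (x : X) (r : ℝ),
          f (F.act x r) = Complex.exp (2 * Real.pi * Complex.I * r / lam) * f x) := by
  constructor
  · rintro ⟨C, hC⟩
    obtain ⟨hmeas, hmeet, hret⟩ := (F.sRegular_singleton_iff hlam).1 hC
    exact F.exists_eigenfunction_of_returnTimes_eq hlam hmeas hmeet hret
  · rintro ⟨f, hfm, hf0, hfe⟩
    exact ⟨_, F.sRegular_of_eigenfunction hlam hfm hf0 hfe⟩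

/-- Ambrose's criterion. A free Borel flow on a standard Borel space admits a
`{λ}`-regular cross section if and only if there is a Borel function `f : X → ℂ \ {0}` with
`f(x + r) = e^{2πir/λ} · f(x)` for all `x` and `r`. -/
theorem ambrose_criterion {X : Type*} [MeasurableSpace X] [StandardBorelSpace X]
    (F : BorelFlow X) (hfree : F.Free) (lam : ℝ) (hlam : 0 < lam) :
    (∃ C : Set X, F.SRegular C {lam}) ↔
      (∃ f : X → ℂ, Measurable f ∧ (∀ x, f x ≠ 0) ∧
        ∀ (x : X) (r : ℝ),
          f (F.act x r) = Complex.exp (2 * Real.pi * Complex.I * r / lam) * f x) :=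
  ambrose_criterion_general F lam hlam
end

section
/- Let S ⊆ ℝ^{>0} be a nonempty set of positive reals. The following are equivalent: (i) the subgroup ⟨S⟩ of (ℝ, +) generated by S is dense in ℝ; (ii) for every ε > 0 there exist a finite subset F ⊆ S and K ≥ 0 such that 𝒯(F) is ε-dense in [K, ∞); (iii) 𝒯(S) is asymptotically dense in ℝ. -/
/-- `𝒯(S)`: the additive semigroup generated by `S`, i.e. all finite sums
`s₁ + ⋯ + sₙ` with `n ≥ 1` and `sₖ ∈ S`. -/
def semigroupGen (S : Set ℝ) : Set ℝ :=
  { x | ∃ l : List ℝ, l ≠ [] ∧ (∀ s ∈ l, s ∈ S) ∧ l.sum = x }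

/-- `A` is `ε`-dense in `I`: every open subinterval of `I` of length `ε` meets `A`. -/
def EpsDenseIn (A : Set ℝ) (ε : ℝ) (I : Set ℝ) : Prop :=
  ∀ x : ℝ, Set.Ioo x (x + ε) ⊆ I → (Set.Ioo x (x + ε) ∩ A).Nonempty

/-- `A` is asymptotically dense in `ℝ`: for every `ε > 0` there is `K ≥ 0` such that
`A` is `ε`-dense in `[K, ∞)`. -/
def AsympDense (A : Set ℝ) : Prop :=
  ∀ ε > 0, ∃ K ≥ 0, EpsDenseIn A ε (Set.Ici K)

/-!
Write a small positive element `g` of `⟨S⟩` as `p - q` with `p` and `q` sums of elements of a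
finite `F ⊆ S`. For `j ≤ M` the number `M q + j g = (M - j) q + j p` is again such a sum, so adding
multiples of a fixed `s ∈ F` with `s ≤ M g` yields a grid of mesh `g` in `𝒯(F)` covering a
half-line. Conversely, two points of `𝒯(S)` far out and less than `ε` apart differ by an element
of `⟨S⟩` in `(0, ε)`, and a subgroup of `ℝ` containing such elements for every `ε` is dense.
-/

open Set

theorem AddSubgroup.exists_finset_subset_mem_closure {G : Type*} [AddCommGroup G] {S : Set G}
    {x : G} (hx : x ∈ AddSubgroup.closure S) :
    ∃ T : Finset G, ↑T ⊆ S ∧ x ∈ AddSubgroup.closure (T : Set G) := by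
  simp only [← Submodule.span_int_eq_addSubgroupClosure, Submodule.mem_toAddSubgroup] at hx ⊢
  exact Submodule.mem_span_finite_of_mem_span hx

theorem AddSubgroup.exists_sub_eq_of_mem_closure {G : Type*} [AddCommGroup G] {S : Set G}
    {x : G} (hx : x ∈ AddSubgroup.closure S) :
    ∃ p ∈ AddSubmonoid.closure S, ∃ q ∈ AddSubmonoid.closure S, p - q = x := by
  induction hx using AddSubgroup.closure_induction with
  | mem x hx => exact ⟨x, AddSubmonoid.subset_closure hx, 0, zero_mem _, sub_zero x⟩
  | zero => exact ⟨0, zero_mem _, 0, zero_mem _, sub_zero 0⟩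
  | add x y _ _ hx hy =>
    obtain ⟨p, hp, q, hq, rfl⟩ := hx
    obtain ⟨p', hp', q', hq', rfl⟩ := hy
    exact ⟨p + p', add_mem hp hp', q + q', add_mem hq hq', by abel⟩
  | neg x _ hx =>
    obtain ⟨p, hp, q, hq, rfl⟩ := hx
    exact ⟨q, hq, p, hp, (neg_sub p q).symm⟩

theorem AddSubsemigroup.add_mem_closure_of_mem_addSubmonoidClosure {M : Type*} [AddMonoid M]
    {S : Set M} {x y : M} (hx : x ∈ AddSubsemigroup.closure S)
    (hy : y ∈ AddSubmonoid.closure S) : x + y ∈ AddSubsemigroup.closure S := by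
  induction hy using AddSubmonoid.closure_induction generalizing x with
  | mem y hy => exact add_mem hx (AddSubsemigroup.subset_closure hy)
  | zero => simpa using hx
  | add y z _ _ hy hz => simpa only [add_assoc] using hz (hy hx)

theorem coe_addSubsemigroupClosure_eq_semigroupGen (S : Set ℝ) :
    (AddSubsemigroup.closure S : Set ℝ) = semigroupGen S := by
  apply Subset.antisymm
  · intro x hx
    induction hx using AddSubsemigroup.closure_induction with
    | mem x hx => exact ⟨[x], by simp, by simpa using hx, by simp⟩
    | add x y _ _ hx hy =>
      obtain ⟨l, hl, hlS, rfl⟩ := hx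
      obtain ⟨l', -, hlS', rfl⟩ := hy
      refine ⟨l ++ l', by simp [hl], fun s hs => ?_, List.sum_append⟩
      exact (List.mem_append.1 hs).elim (hlS s) (hlS' s)
  · rintro _ ⟨l, hl, hlS, rfl⟩
    induction l with
    | nil => contradiction
    | cons a l ih =>
      have ha : a ∈ AddSubsemigroup.closure S := AddSubsemigroup.subset_closure (hlS a (by simp))
      rcases eq_or_ne l [] with rfl | hl'
      · simpa using ha
      · rw [List.sum_cons]
        exact add_mem ha (ih hl' fun s hs => hlS s (List.mem_cons_of_mem a hs))

theorem EpsDenseIn.mono {A B I J : Set ℝ} {ε : ℝ} (h : EpsDenseIn A ε I) (hAB : A ⊆ B)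
    (hJI : J ⊆ I) : EpsDenseIn B ε J :=
  fun x hx => (h x (hx.trans hJI)).mono (inter_subset_inter_right _ hAB)

theorem AsympDense.mono {A B : Set ℝ} (h : AsympDense A) (hAB : A ⊆ B) : AsympDense B :=
  fun ε hε => (h ε hε).imp fun _ ⟨hK, hA⟩ => ⟨hK, hA.mono hAB subset_rfl⟩

theorem exists_nat_mul_le_lt_add_one_mul {y s : ℝ} (hy : 0 ≤ y) (hs : 0 < s) :
    ∃ n : ℕ, n * s ≤ y ∧ y < (n + 1) * s :=
  ⟨⌊y / s⌋₊, (le_div_iff₀ hs).1 (Nat.floor_le (div_nonneg hy hs.le)),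
    (div_lt_iff₀ hs).1 (Nat.lt_floor_add_one _)⟩

theorem epsDenseIn_Ici_of_forall_add_mul_mem {A : Set ℝ} {a s g ε : ℝ} {M : ℕ} (hs : 0 < s)
    (hg : 0 < g) (hgε : g < ε) (hM : s ≤ M * g)
    (hA : ∀ n j : ℕ, j ≤ M → a + n * s + j * g ∈ A) : EpsDenseIn A ε (Ici a) := by
  intro x hx
  have hax : a ≤ x := isClosed_Ici.closure_subset_iff.2 hx <| by
    rw [closure_Ioo (by linarith)]
    exact left_mem_Icc.2 (by linarith)
  obtain ⟨n, hn, hn'⟩ := exists_nat_mul_le_lt_add_one_mul (sub_nonneg.2 hax) hs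
  obtain ⟨k, hk, hk'⟩ := exists_nat_mul_le_lt_add_one_mul (by linarith : 0 ≤ x - a - n * s) hg
  have hkM : k < M := by
    have : (k : ℝ) * g < M * g := by linarith
    exact_mod_cast lt_of_mul_lt_mul_right this hg.le
  refine ⟨a + n * s + (k + 1 : ℕ) * g, ⟨?_, ?_⟩, hA n (k + 1) hkM⟩ <;> push_cast <;> linarith

theorem exists_epsDenseIn_addSubsemigroupClosure_of_mem_closure {T : Set ℝ}
    (hpos : ∀ t ∈ T, 0 < t) {g ε : ℝ} (hg : g ∈ AddSubgroup.closure T) (hg0 : 0 < g)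
    (hgε : g < ε) : ∃ K ≥ 0, EpsDenseIn (AddSubsemigroup.closure T) ε (Ici K) := by
  obtain ⟨s, hs⟩ : T.Nonempty := by
    rw [nonempty_iff_ne_empty]
    rintro rfl
    simp only [AddSubgroup.closure_empty, AddSubgroup.mem_bot] at hg
    exact hg0.ne' hg
  obtain ⟨p, hp, q, hq, rfl⟩ := AddSubgroup.exists_sub_eq_of_mem_closure hg
  obtain ⟨M, hM⟩ := exists_nat_ge (s / (p - q))
  have hgrid : ∀ n j : ℕ, j ≤ M →
      s + M * q + n * s + j * (p - q) ∈ AddSubsemigroup.closure T := by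
    intro n j hj
    have hcomb : s + M * q + n * s + j * (p - q) = s + (n • s + (M - j) • q + j • p) := by
      simp only [nsmul_eq_mul]
      push_cast [Nat.cast_sub hj]
      ring
    rw [hcomb]
    refine AddSubsemigroup.add_mem_closure_of_mem_addSubmonoidClosure
      (AddSubsemigroup.subset_closure hs) ?_
    exact add_mem (add_mem (nsmul_mem (AddSubmonoid.subset_closure hs) n) (nsmul_mem hq _))
      (nsmul_mem hp j)
  refine ⟨max (s + M * q) 0, le_max_right _ _, ?_⟩
  exact (epsDenseIn_Ici_of_forall_add_mul_mem (hpos s hs) hg0 hgε ((div_le_iff₀ hg0).1 hM)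
    hgrid).mono subset_rfl (Ici_subset_Ici.2 (le_max_left _ _))

theorem AddSubgroup.dense_of_asympDense (H : AddSubgroup ℝ) (h : AsympDense H) :
    Dense (H : Set ℝ) := by
  refine H.dense_of_not_isolated_zero fun ε hε => ?_
  obtain ⟨K, -, hK⟩ := h ε hε
  obtain ⟨y, ⟨hKy, -⟩, hy⟩ := hK K fun t ht => ht.1.le
  obtain ⟨z, ⟨hyz, hzy⟩, hz⟩ := hK y fun t ht => (hKy.trans ht.1).le
  exact ⟨z - y, sub_mem hz hy, sub_pos.2 hyz, by linarith⟩

theorem dense_subgroup_iff_asymp_dense_semigroup_general (S : Set ℝ)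
    (hpos : ∀ s ∈ S, 0 < s) :
    (Dense (AddSubgroup.closure S : Set ℝ) ↔
      ∀ ε > 0, ∃ F : Finset ℝ, (F : Set ℝ) ⊆ S ∧
        ∃ K ≥ (0 : ℝ), EpsDenseIn (semigroupGen (F : Set ℝ)) ε (Set.Ici K)) ∧
    (Dense (AddSubgroup.closure S : Set ℝ) ↔ AsympDense (semigroupGen S)) := by
  simp only [← coe_addSubsemigroupClosure_eq_semigroupGen]
  have dense_imp_finite : Dense (AddSubgroup.closure S : Set ℝ) → ∀ ε > 0, ∃ F : Finset ℝ,
      ↑F ⊆ S ∧ ∃ K ≥ (0 : ℝ), EpsDenseIn (AddSubsemigroup.closure (F : Set ℝ)) ε (Ici K) := by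
    intro hd ε hε
    obtain ⟨g, hg, hg0, hgε⟩ := hd.exists_between hε
    obtain ⟨F, hFS, hgF⟩ := AddSubgroup.exists_finset_subset_mem_closure hg
    exact ⟨F, hFS, exists_epsDenseIn_addSubsemigroupClosure_of_mem_closure
      (fun t ht => hpos t (hFS ht)) hgF hg0 hgε⟩
  have finite_imp_asymp : (∀ ε > 0, ∃ F : Finset ℝ, ↑F ⊆ S ∧ ∃ K ≥ (0 : ℝ),
      EpsDenseIn (AddSubsemigroup.closure (F : Set ℝ)) ε (Ici K)) →
      AsympDense (AddSubsemigroup.closure S) := by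
    intro h ε hε
    obtain ⟨F, hFS, K, hK, hF⟩ := h ε hε
    exact ⟨K, hK, hF.mono (AddSubsemigroup.closure_mono hFS) subset_rfl⟩
  have asymp_imp_dense (h : AsympDense (AddSubsemigroup.closure S)) :
      Dense (AddSubgroup.closure S : Set ℝ) :=
    AddSubgroup.dense_of_asympDense _ <| h.mono <|
      AddSubsemigroup.closure_le (S := (AddSubgroup.closure S).toAddSubmonoid.toAddSubsemigroup)
        |>.2 AddSubgroup.subset_closure
  exact ⟨⟨dense_imp_finite, asymp_imp_dense ∘ finite_imp_asymp⟩,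
    ⟨finite_imp_asymp ∘ dense_imp_finite, asymp_imp_dense⟩⟩

/-- For a nonempty set `S` of positive reals the following are equivalent:
(i) the subgroup of `(ℝ, +)` generated by `S` is dense in `ℝ`;
(ii) for every `ε > 0` there are a finite `F ⊆ S` and `K ≥ 0` with `𝒯(F)` `ε`-dense in `[K, ∞)`;
(iii) `𝒯(S)` is asymptotically dense in `ℝ`. -/
theorem dense_subgroup_iff_asymp_dense_semigroup (S : Set ℝ) (hS : S.Nonempty)
    (hpos : ∀ s ∈ S, 0 < s) :
    (Dense (AddSubgroup.closure S : Set ℝ) ↔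
      ∀ ε > 0, ∃ F : Finset ℝ, (F : Set ℝ) ⊆ S ∧
        ∃ K ≥ (0 : ℝ), EpsDenseIn (semigroupGen (F : Set ℝ)) ε (Set.Ici K)) ∧
    (Dense (AddSubgroup.closure S : Set ℝ) ↔ AsympDense (semigroupGen S)) :=
  dense_subgroup_iff_asymp_dense_semigroup_general S hpos
end

section
/- Let ε > 0, let d ∈ ℝ, and let R ⊆ U_ε(d) be nonempty. If y_1, …, y_n ∈ R are such that |n·d − Σ_{i=1}^n y_i| < ε, then Σ_{i=1}^n y_i ∈ A_n(ε, d, R). -/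
/-- `U_ε(x)`: the open `ε`-neighborhood `(x - ε, x + ε)`. -/
def USet (ε x : ℝ) : Set ℝ := Set.Ioo (x - ε) (x + ε)

/-- `A(ε, (dᵢ), (Rᵢ))`: the set of `z ∈ U_ε(d₁ + ⋯ + dₙ)` which can be written as
`z = x₁ + ⋯ + xₙ` with `xᵢ ∈ Rᵢ` and `|Σ_{i ≤ r} (dᵢ - xᵢ)| < ε` for all `r ≤ n`. -/
def ASeq (ε : ℝ) (n : ℕ) (d : ℕ → ℝ) (R : ℕ → Set ℝ) : Set ℝ :=
  { z | z ∈ USet ε (∑ i ∈ Finset.range n, d i) ∧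
    ∃ x : ℕ → ℝ, (∀ i < n, x i ∈ R i) ∧ z = ∑ i ∈ Finset.range n, x i ∧
      ∀ r ≤ n, |∑ i ∈ Finset.range r, (d i - x i)| < ε }

/-- `A_n(ε, d, R)`: the set `A(ε, (dᵢ), (Rᵢ))` for constant sequences `dᵢ = d`, `Rᵢ = R`. -/
def ASet (ε d : ℝ) (R : Set ℝ) (n : ℕ) : Set ℝ := ASeq ε n (fun _ => d) (fun _ => R)

/-- `g = gcd(a, b)` for reals: either `g > 0` is the greatest common divisor of `a` and `b`
(the largest `c > 0` such that `a` and `b` are integer multiples of `c`), or `g = 0` and no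
positive common divisor exists. -/
def IsRealGcd (a b g : ℝ) : Prop :=
  (0 < g ∧ (∃ k : ℤ, a = k * g) ∧ (∃ k : ℤ, b = k * g) ∧
    ∀ c : ℝ, 0 < c → (∃ k : ℤ, a = k * c) → (∃ k : ℤ, b = k * c) → c ≤ g) ∨
  (g = 0 ∧ ∀ c : ℝ, 0 < c → (∃ k : ℤ, a = k * c) → (∃ k : ℤ, b = k * c) → False)

/-!
Put `aᵢ = d - yᵢ`, so `|aᵢ| < ε` and `|∑ aᵢ| < ε`; it suffices to order the `aᵢ` so that all
partial sums stay in `(-ε, ε)`. Some term can always be removed with the rest still summing into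
`(-ε, ε)`: if the total `T` is `≥ 0` and every removal failed, then every `aⱼ ≤ T - ε`, so
`T ≤ n (T - ε) < T`. Putting that term last and recursing gives the ordering.
-/

open Finset

lemma exists_abs_sum_sub_lt_of_nonneg {ι : Type*} {s : Finset ι} (hs : s.Nonempty)
    {a : ι → ℝ} {ε : ℝ} (ha : ∀ i ∈ s, a i < ε) (hT₀ : 0 ≤ ∑ i ∈ s, a i)
    (hT : ∑ i ∈ s, a i < ε) : ∃ j ∈ s, |∑ i ∈ s, a i - a j| < ε := by
  by_contra! hc
  set T := ∑ i ∈ s, a i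
  have hle : ∀ j ∈ s, a j ≤ T - ε := fun j hj => by
    rcases le_abs'.mp (hc j hj) with h | h <;> linarith [ha j hj]
  have hcard : (1 : ℝ) ≤ #s := by exact_mod_cast hs.card_pos
  have := s.sum_le_card_nsmul a (T - ε) hle
  rw [nsmul_eq_mul] at this
  nlinarith

lemma exists_abs_sum_sub_lt {ι : Type*} {s : Finset ι} (hs : s.Nonempty)
    {a : ι → ℝ} {ε : ℝ} (ha : ∀ i ∈ s, |a i| < ε) (hT : |∑ i ∈ s, a i| < ε) :
    ∃ j ∈ s, |∑ i ∈ s, a i - a j| < ε := by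
  rcases le_total 0 (∑ i ∈ s, a i) with hT₀ | hT₀
  · exact exists_abs_sum_sub_lt_of_nonneg hs (fun i hi => (abs_lt.mp (ha i hi)).2) hT₀
      (abs_lt.mp hT).2
  · obtain ⟨j, hj, hlt⟩ := exists_abs_sum_sub_lt_of_nonneg (a := fun i => -a i) (ε := ε) hs
      (fun i hi => by linarith [(abs_lt.mp (ha i hi)).1])
      (by rw [sum_neg_distrib]; linarith) (by rw [sum_neg_distrib]; linarith [(abs_lt.mp hT).1])
    refine ⟨j, hj, ?_⟩
    rwa [sum_neg_distrib, ← neg_add', abs_neg, ← sub_eq_add_neg] at hlt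

lemma Equiv.Perm.lt_of_forall_le_apply_eq {σ : Equiv.Perm ℕ} {n : ℕ}
    (hσ : ∀ i, n ≤ i → σ i = i) {i : ℕ} (hi : i < n) : σ i < n := by
  by_contra! h
  have := σ.injective (hσ _ h)
  omega

lemma Equiv.Perm.sum_range_comp_of_forall_le_apply_eq {M : Type*} [AddCommMonoid M]
    {σ : Equiv.Perm ℕ} {n : ℕ} (hσ : ∀ i, n ≤ i → σ i = i) (f : ℕ → M) :
    ∑ i ∈ range n, f (σ i) = ∑ i ∈ range n, f i :=
  σ.sum_comp _ f fun i hi => by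
    by_contra h
    exact hi (hσ i (by simpa using h))

theorem exists_perm_forall_abs_sum_range_lt {ε : ℝ} {n : ℕ} {a : ℕ → ℝ}
    (ha : ∀ i < n, |a i| < ε) (hsum : |∑ i ∈ range n, a i| < ε) :
    ∃ σ : Equiv.Perm ℕ, (∀ i, n ≤ i → σ i = i) ∧
      ∀ r ≤ n, |∑ i ∈ range r, a (σ i)| < ε := by
  induction n generalizing a with
  | zero =>
    refine ⟨1, fun _ _ => rfl, fun r hr => ?_⟩
    rwa [Nat.le_zero.mp hr]
  | succ n ih =>
    obtain ⟨j, hj, hlast⟩ := exists_abs_sum_sub_lt nonempty_range_add_one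
      (fun i hi => ha i (mem_range.mp hi)) hsum
    have hj : j < n + 1 := mem_range.mp hj
    set τ := Equiv.swap j n
    have hτ : ∀ i, n + 1 ≤ i → τ i = i := fun i hi =>
      Equiv.swap_apply_of_ne_of_ne (by omega) (by omega)
    have hsum_τ : ∑ i ∈ range (n + 1), a (τ i) = ∑ i ∈ range (n + 1), a i :=
      Equiv.Perm.sum_range_comp_of_forall_le_apply_eq hτ a
    obtain ⟨σ, hσ, hpartial⟩ := ih (a := fun i => a (τ i))
      (fun i hi => ha _ (Equiv.Perm.lt_of_forall_le_apply_eq hτ (by omega)))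
      (by rwa [← sum_range_succ_sub_top, hsum_τ, Equiv.swap_apply_right])
    have hστ : ∀ i, n + 1 ≤ i → (τ * σ) i = i := fun i hi => by
      rw [Equiv.Perm.mul_apply, hσ i (by omega), hτ i hi]
    refine ⟨τ * σ, hστ, fun r hr => ?_⟩
    rcases Nat.lt_or_eq_of_le hr with hr | rfl
    · exact hpartial r (by omega)
    · rwa [Equiv.Perm.sum_range_comp_of_forall_le_apply_eq hστ a]

theorem sum_mem_ASet_general (ε d : ℝ) (R : Set ℝ) (hR : R ⊆ USet ε d)
    (n : ℕ) (y : ℕ → ℝ) (hy : ∀ i < n, y i ∈ R)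
    (h : |(n : ℝ) * d - ∑ i ∈ Finset.range n, y i| < ε) :
    (∑ i ∈ Finset.range n, y i) ∈ ASet ε d R n := by
  have hdist : ∀ i < n, |d - y i| < ε := fun i hi => by
    have := hR (hy i hi)
    rw [USet, Set.mem_Ioo] at this
    exact abs_sub_lt_iff.mpr ⟨by linarith, by linarith⟩
  have hsum_d : ∑ _i ∈ range n, d = n * d := by simp
  obtain ⟨σ, hσ, hpartial⟩ := exists_perm_forall_abs_sum_range_lt hdist
    (by rwa [sum_sub_distrib, hsum_d])
  refine ⟨?_, fun i => y (σ i), fun i hi => hy _ (σ.lt_of_forall_le_apply_eq hσ hi),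
    (σ.sum_range_comp_of_forall_le_apply_eq hσ y).symm, hpartial⟩
  rw [USet, Set.mem_Ioo, hsum_d]
  obtain ⟨h₁, h₂⟩ := abs_sub_lt_iff.mp h
  exact ⟨by linarith, by linarith⟩

/-- If `y₁, …, yₙ ∈ R` are such that `|n·d − Σ yᵢ| < ε`, then
`Σ yᵢ ∈ A_n(ε, d, R)`. -/
theorem sum_mem_ASet (ε d : ℝ) (hε : 0 < ε) (R : Set ℝ) (hR : R ⊆ USet ε d)
    (hne : R.Nonempty) (n : ℕ) (y : ℕ → ℝ) (hy : ∀ i < n, y i ∈ R)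
    (h : |(n : ℝ) * d - ∑ i ∈ Finset.range n, y i| < ε) :
    (∑ i ∈ Finset.range n, y i) ∈ ASet ε d R n :=
  sum_mem_ASet_general ε d R hR n y hy h
end

section
/- Let ε > 0, let d ∈ ℝ, and let R ⊆ U_ε(d) be nonempty. If x_i ∈ A_{n_i}(ε, d, R) for 1 ≤ i ≤ k are such that |Σ_{i=1}^j (x_i − n_i·d)| < ε for every j ≤ k, then Σ_{i=1}^k x_i ∈ A_{n_1 + ⋯ + n_k}(ε, d, R). -/
open Finset

theorem mem_USet_iff {ε x y : ℝ} : y ∈ USet ε x ↔ |x - y| < ε := by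
  rw [USet, ← Real.ball_eq_Ioo, Metric.mem_ball, Real.dist_eq, abs_sub_comm]

section Rearrangement

variable {α : Type*} {f : α → ℝ} {ε p : ℝ}

/-- For `p ≥ 0`: a step `f a ≤ 0` keeps `p + f a` in `(-ε, ε)`; if every step is positive, a single
step moves less far than the whole sum does. -/
theorem exists_mem_abs_add_lt {l : List α} (hne : l ≠ []) (hf : ∀ a ∈ l, |f a| < ε)
    (hp : |p| < ε) (hl : |p + (l.map f).sum| < ε) : ∃ a ∈ l, |p + f a| < ε := by
  wlog hp₀ : 0 ≤ p generalizing f p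
  · have hsum : (l.map fun a => -f a).sum = -(l.map f).sum := by
      rw [List.sum_neg, List.map_map]; rfl
    obtain ⟨a, ha, hpa⟩ := this (f := fun a => -f a) (p := -p) (by simpa using hf)
      (by simpa using hp) (by rwa [hsum, ← neg_add, abs_neg]) (by linarith)
    exact ⟨a, ha, by rwa [← neg_add, abs_neg] at hpa⟩
  by_cases hneg : ∃ a ∈ l, f a ≤ 0
  · obtain ⟨a, ha, hfa⟩ := hneg
    have := abs_lt.1 (hf a ha)
    have := abs_lt.1 hp
    exact ⟨a, ha, abs_lt.2 ⟨by linarith, by linarith⟩⟩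
  · push Not at hneg
    obtain ⟨a, ha⟩ := l.exists_mem_of_ne_nil hne
    have hle : f a ≤ (l.map f).sum :=
      List.single_le_sum (by simpa using fun b hb => (hneg b hb).le) _ (List.mem_map_of_mem ha)
    have := abs_lt.1 hl
    exact ⟨a, ha, abs_lt.2 ⟨by linarith [hneg a ha], by linarith⟩⟩

theorem exists_perm_abs_add_sum_take_lt (l : List α) (hf : ∀ a ∈ l, |f a| < ε)
    (hp : |p| < ε) (hl : |p + (l.map f).sum| < ε) :
    ∃ l' : List α, l'.Perm l ∧ ∀ t, |p + ((l'.take t).map f).sum| < ε := by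
  classical
  induction hn : l.length generalizing l p with
  | zero =>
    obtain rfl := List.eq_nil_of_length_eq_zero hn
    exact ⟨[], List.Perm.refl _, fun t => by simpa using hp⟩
  | succ n ih =>
    obtain ⟨a, ha, hpa⟩ := exists_mem_abs_add_lt (List.ne_nil_of_length_eq_add_one hn) hf hp hl
    have hperm : l.Perm (a :: l.erase a) := List.perm_cons_erase ha
    have hsum : (l.map f).sum = f a + ((l.erase a).map f).sum := by
      simpa using (hperm.map f).sum_eq
    obtain ⟨l₁, hl₁, hbound⟩ := ih (l.erase a) (fun b hb => hf b (List.mem_of_mem_erase hb)) hpa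
      (by rwa [add_assoc, ← hsum]) (by simp [List.length_erase_of_mem ha, hn])
    refine ⟨a :: l₁, (hl₁.cons a).trans hperm.symm, fun t => ?_⟩
    cases t with
    | zero => simpa using hp
    | succ t => simpa [add_assoc] using hbound t

end Rearrangement

theorem sum_range_getD_eq_sum_map_take {α M : Type*} [AddCommMonoid M] (L : List α) (x₀ : α)
    (f : α → M) {r : ℕ} (hr : r ≤ L.length) :
    ∑ i ∈ range r, f (L.getD i x₀) = ((L.take r).map f).sum := by
  induction r with
  | zero => simp
  | succ r ih =>
    rw [sum_range_succ, ih (by omega), List.getD_eq_getElem _ _ (by omega), List.map_take,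
      List.map_take, List.sum_take_succ _ _ (by simpa using hr), List.getElem_map]

theorem List.sum_map_const_sub {G : Type*} [AddCommGroup G] (L : List G) (d : G) :
    (L.map (d - ·)).sum = L.length • d - L.sum := by
  induction L with
  | nil => simp
  | cons a L ih => simp only [List.map_cons, List.sum_cons, ih, List.length_cons, succ_nsmul]; abel

theorem List.sum_map_range {M : Type*} [AddCommMonoid M] (f : ℕ → M) (n : ℕ) :
    ((List.range n).map f).sum = ∑ i ∈ Finset.range n, f i := by
  induction n with
  | zero => simp
  | succ n ih => rw [List.sum_range_succ, ih, Finset.sum_range_succ]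

theorem mem_ASet_iff_exists_list {ε d z : ℝ} {R : Set ℝ} {n : ℕ} :
    z ∈ ASet ε d R n ↔ ∃ L : List ℝ, L.length = n ∧ (∀ a ∈ L, a ∈ R) ∧ L.sum = z ∧
      ∀ r, |((L.take r).map (d - ·)).sum| < ε := by
  constructor
  · rintro ⟨-, x, hxR, rfl, hx⟩
    refine ⟨(List.range n).map x, by simp, by simpa using hxR, List.sum_map_range x n,
      fun r => ?_⟩
    rw [← List.map_take, List.take_range, List.map_map, List.sum_map_range]
    exact hx _ (min_le_right r n)
  · rintro ⟨L, rfl, hLR, rfl, hL⟩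
    have hpartial : ∀ r ≤ L.length,
        ∑ i ∈ range r, (d - L.getD i 0) = ((L.take r).map (d - ·)).sum :=
      fun r hr => sum_range_getD_eq_sum_map_take L 0 _ hr
    have hsum : ∑ i ∈ range L.length, L.getD i 0 = L.sum := by
      simpa using sum_range_getD_eq_sum_map_take L 0 id le_rfl
    refine ⟨?_, fun i => L.getD i 0, fun i hi => ?_, hsum.symm, fun r hr => ?_⟩
    · have := hL L.length
      rw [← hpartial _ le_rfl, sum_sub_distrib, hsum] at this
      simpa [mem_USet_iff] using this
    · show L.getD i 0 ∈ R
      rw [List.getD_eq_getElem _ _ hi]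
      exact hLR _ (List.getElem_mem hi)
    · show |∑ i ∈ range r, (d - L.getD i 0)| < ε
      rw [hpartial r hr]
      exact hL r

theorem add_mem_ASet {ε d u v : ℝ} {R : Set ℝ} (hR : R ⊆ USet ε d) {n₁ n₂ : ℕ}
    (hu : u ∈ ASet ε d R n₁) (hv : v ∈ ASet ε d R n₂)
    (hend : |u + v - ((n₁ + n₂ : ℕ) : ℝ) * d| < ε) : u + v ∈ ASet ε d R (n₁ + n₂) := by
  obtain ⟨L, rfl, hLR, rfl, hL⟩ := mem_ASet_iff_exists_list.1 hu
  obtain ⟨M, rfl, hMR, rfl, -⟩ := mem_ASet_iff_exists_list.1 hv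
  have hstep : ∀ a ∈ M, |d - a| < ε := fun a ha => mem_USet_iff.1 (hR (hMR a ha))
  have hp : |(L.map (d - ·)).sum| < ε := by simpa using hL L.length
  have hLM : |(L.map (d - ·)).sum + (M.map (d - ·)).sum| < ε := by
    rw [List.sum_map_const_sub, List.sum_map_const_sub, ← abs_neg]
    convert hend using 2
    push_cast
    ring
  obtain ⟨M', hM', hbound⟩ := exists_perm_abs_add_sum_take_lt M hstep hp hLM
  refine mem_ASet_iff_exists_list.2 ⟨L ++ M', by simp [hM'.length_eq], ?_, by simp [hM'.sum_eq],
    fun r => ?_⟩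
  · simp only [List.mem_append]
    rintro a (ha | ha)
    exacts [hLR a ha, hMR a (hM'.mem_iff.1 ha)]
  · rw [List.take_append, List.map_append, List.sum_append]
    rcases le_or_gt r L.length with hr | hr
    · simpa [Nat.sub_eq_zero_of_le hr] using hL r
    · rw [List.take_of_length_le hr.le]
      exact hbound _

theorem ASet_additivity_general (ε d : ℝ) (R : Set ℝ) (hR : R ⊆ USet ε d)
    (k : ℕ) (m : ℕ → ℕ) (x : ℕ → ℝ)
    (hx : ∀ i < k, x i ∈ ASet ε d R (m i))
    (h : ∀ j ≤ k, |∑ i ∈ Finset.range j, (x i - (m i : ℝ) * d)| < ε) :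
    (∑ i ∈ Finset.range k, x i) ∈ ASet ε d R (∑ i ∈ Finset.range k, m i) := by
  induction k with
  | zero =>
    have hε : 0 < ε := by simpa using h 0 le_rfl
    exact mem_ASet_iff_exists_list.2 ⟨[], rfl, by simp, rfl, fun r => by simpa using hε⟩
  | succ k ih =>
    rw [sum_range_succ, sum_range_succ]
    refine add_mem_ASet hR (ih (fun i hi => hx i (by omega)) fun j hj => h j (by omega))
      (hx k (by omega)) ?_
    simpa [sum_range_succ, sum_sub_distrib, ← sum_mul, add_mul] using h (k + 1) le_rfl

/-- If `xᵢ ∈ A_{nᵢ}(ε, d, R)` for `1 ≤ i ≤ k` are such that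
`|Σ_{i ≤ j} (xᵢ − nᵢ·d)| < ε` for every `j ≤ k`, then `Σ xᵢ ∈ A_{n₁ + ⋯ + n_k}(ε, d, R)`. -/
theorem ASet_additivity (ε d : ℝ) (hε : 0 < ε) (R : Set ℝ) (hR : R ⊆ USet ε d)
    (hne : R.Nonempty) (k : ℕ) (m : ℕ → ℕ) (x : ℕ → ℝ)
    (hx : ∀ i < k, x i ∈ ASet ε d R (m i))
    (h : ∀ j ≤ k, |∑ i ∈ Finset.range j, (x i - (m i : ℝ) * d)| < ε) :
    (∑ i ∈ Finset.range k, x i) ∈ ASet ε d R (∑ i ∈ Finset.range k, m i) :=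
  ASet_additivity_general ε d R hR k m x hx h
end

section
/- Let ε > 0, let d ∈ ℝ, and let R ⊆ U_ε(d) be a set with d ∈ R. Then for all natural numbers m ≤ n one has A_m(ε, d, R) + (n − m)·d ⊆ A_n(ε, d, R). -/
open Finset

theorem Finset.sum_range_ite_lt {M : Type*} [AddCommMonoid M] (f g : ℕ → M) (m r : ℕ) :
    ∑ i ∈ range r, (if i < m then f i else g i) =
      ∑ i ∈ range (min r m), f i + ∑ i ∈ Ico m r, g i := by
  rcases le_total r m with hrm | hmr
  · rw [min_eq_left hrm, Ico_eq_empty_of_le hrm, sum_empty, add_zero]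
    exact sum_congr rfl fun i hi => if_pos ((mem_range.1 hi).trans_le hrm)
  · rw [min_eq_right hmr, ← sum_range_add_sum_Ico _ hmr]
    congr 1
    · exact sum_congr rfl fun i hi => if_pos (mem_range.1 hi)
    · exact sum_congr rfl fun i hi => if_neg (not_lt.2 (mem_Ico.1 hi).1)

/-- Pad the representation of `z` with `xᵢ = dᵢ` for `m ≤ i < n`: the partial sums of `dᵢ - xᵢ`
then stop changing after `m`. -/
theorem add_sum_Ico_mem_ASeq {ε : ℝ} {m n : ℕ} {d : ℕ → ℝ} {R : ℕ → Set ℝ} (hmn : m ≤ n)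
    (hd : ∀ i ∈ Ico m n, d i ∈ R i) {z : ℝ} (hz : z ∈ ASeq ε m d R) :
    z + ∑ i ∈ Ico m n, d i ∈ ASeq ε n d R := by
  obtain ⟨hzU, x, hxR, rfl, hpartial⟩ := hz
  refine ⟨?_, fun i => if i < m then x i else d i, ?_, ?_, ?_⟩
  · rw [← sum_range_add_sum_Ico _ hmn]
    simp only [USet, Set.mem_Ioo] at hzU ⊢
    constructor <;> linarith [hzU.1, hzU.2]
  · intro i hi
    dsimp only
    split_ifs with him
    exacts [hxR i him, hd i (mem_Ico.2 ⟨not_lt.1 him, hi⟩)]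
  · rw [sum_range_ite_lt, min_eq_right hmn]
  · intro r _
    have hpad : ∑ i ∈ range r, (d i - if i < m then x i else d i) =
        ∑ i ∈ range (min r m), (d i - x i) := by
      simp_rw [sub_ite, sub_self, sum_range_ite_lt, sum_const_zero, add_zero]
    rw [hpad]
    exact hpartial _ (min_le_right r m)

theorem ASet_shift_subset_general (ε d : ℝ) (R : Set ℝ)
    (hd : d ∈ R) (m n : ℕ) (hmn : m ≤ n) :
    ∀ z ∈ ASet ε d R m, z + ((n - m : ℕ) : ℝ) * d ∈ ASet ε d R n := by
  intro z hz
  simpa only [ASet, sum_const, Nat.card_Ico, nsmul_eq_mul] using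
    add_sum_Ico_mem_ASeq (d := fun _ => d) (R := fun _ => R) hmn (fun _ _ => hd) hz

/-- If `d ∈ R` and `m ≤ n`, then `A_m(ε, d, R) + (n − m)·d ⊆ A_n(ε, d, R)`. -/
theorem ASet_shift_subset (ε d : ℝ) (hε : 0 < ε) (R : Set ℝ) (hR : R ⊆ USet ε d)
    (hd : d ∈ R) (m n : ℕ) (hmn : m ≤ n) :
    ∀ z ∈ ASet ε d R m, z + ((n - m : ℕ) : ℝ) * d ∈ ASet ε d R n :=
  ASet_shift_subset_general ε d R hd m n hmn
end

section
/- Let ε > 0, let 0 < δ ≤ ε, let d ∈ ℝ, let R ⊆ U_ε(d) with d ∈ R, let m ≥ 1, and let x, y ∈ A_m(ε, d, R). Set a = x − m·d and b = y − m·d, and suppose a < 0 < b and δ > gcd(a, b). Then there exists N ∈ ℕ such that for all n ≥ N the set A_n(ε, d, R) is δ-dense in U_ε(n·d). -/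
/-!
Write `a = x - m d` and `b = y - m d`. A multiset of `n` summands, each within `ε` of `d`, whose
sum deviates from `n d` by less than `ε`, can be ordered so that every partial sum stays within
`ε` of the corresponding multiple of `d`: put last a summand lying on the same side of `d` as the
total deviation. Concatenating `p` representations of `x`, `q` of `y` and padding with copies
of `d` therefore puts `n d + z` into `A_n` for every `z = p a + q b ∈ (-ε, ε)` and `n ≥ (p + q) m`.

Since `gcd(a, b) < δ`, the group `ℤ a + ℤ b`, being dense or cyclic, meets `(0, δ)`; as `a < 0 < b`
this gives some `s ∈ (0, δ)` in the monoid `ℕ a + ℕ b`. The progression `M a + k s` then meets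
every interval of length `δ` in `(-ε, ε)` through finitely many of its terms, which all lie in
`A_n` for `n` large.
-/

open Finset Filter

theorem Multiset.exists_mem_mul_sub_nonneg (s : Multiset ℝ) (hs : s ≠ 0) (d : ℝ) :
    ∃ t ∈ s, 0 ≤ (d - t) * (Multiset.card s * d - s.sum) := by
  set D := Multiset.card s * d - s.sum
  by_contra! h
  have hlt := Multiset.sum_lt_sum_of_nonempty hs h
  have hsum : (s.map fun t => (d - t) * D).sum = D * D := by
    rw [Multiset.sum_map_mul_right, Multiset.sum_map_sub, Multiset.map_const',
      Multiset.sum_replicate, Multiset.map_id', nsmul_eq_mul]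
  simp only [hsum, Multiset.map_const', Multiset.sum_replicate, smul_zero] at hlt
  exact (mul_self_nonneg D).not_gt hlt

section ASet

variable {ε d : ℝ} {R : Set ℝ}

theorem mem_ASet_iff {z : ℝ} {n : ℕ} :
    z ∈ ASet ε d R n ↔ ∃ x : ℕ → ℝ, (∀ i < n, x i ∈ R) ∧ z = ∑ i ∈ range n, x i ∧
      ∀ r ≤ n, |r * d - ∑ i ∈ range r, x i| < ε := by
  have hdev (x : ℕ → ℝ) (r : ℕ) : ∑ i ∈ range r, (d - x i) = r * d - ∑ i ∈ range r, x i := by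
    simp [sum_sub_distrib]
  simp only [ASet, ASeq, hdev]
  refine ⟨fun ⟨_, hx⟩ => hx, fun ⟨x, hxR, hz, hx⟩ => ⟨?_, x, hxR, hz, hx⟩⟩
  have := abs_lt.1 (hx n le_rfl)
  simp only [USet, sum_const, card_range, nsmul_eq_mul, Set.mem_Ioo]
  constructor <;> linarith

theorem add_mem_ASet_succ {w t : ℝ} {n : ℕ} (hw : w ∈ ASet ε d R n)
    (ht : t ∈ R) (h : |(n + 1) * d - (w + t)| < ε) : w + t ∈ ASet ε d R (n + 1) := by
  obtain ⟨x, hxR, rfl, hx⟩ := mem_ASet_iff.1 hw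
  have hsum {r : ℕ} (hr : r ≤ n) :
      ∑ i ∈ range r, Function.update x n t i = ∑ i ∈ range r, x i :=
    sum_update_of_notMem (by simpa using hr) _ _
  refine mem_ASet_iff.2 ⟨Function.update x n t, fun i hi => ?_, ?_, fun r hr => ?_⟩
  · rcases eq_or_ne i n with rfl | hin
    · simpa using ht
    · simpa [hin] using hxR i (by omega)
  · rw [sum_range_succ, hsum le_rfl, Function.update_self]
  · rcases Nat.of_le_succ hr with hr | rfl
    · rw [hsum hr]
      exact hx r hr
    · rw [sum_range_succ, hsum le_rfl, Function.update_self]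
      exact_mod_cast h

theorem Multiset.sum_mem_ASet (hR : R ⊆ USet ε d) {s : Multiset ℝ}
    (hs : ∀ t ∈ s, t ∈ R) (h : |Multiset.card s * d - s.sum| < ε) :
    s.sum ∈ ASet ε d R (Multiset.card s) := by
  obtain ⟨n, hn⟩ : ∃ n, Multiset.card s = n := ⟨_, rfl⟩
  induction n generalizing s with
  | zero =>
    obtain rfl := Multiset.card_eq_zero.1 hn
    refine mem_ASet_iff.2 ⟨fun _ => d, by simp, by simp, fun r hr => ?_⟩
    simpa [Nat.le_zero.1 hr] using h
  | succ n ih =>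
    -- the last summand `t` lies on the same side of `d` as the total deviation
    obtain ⟨t, hts, hsign⟩ := s.exists_mem_mul_sub_nonneg (by rintro rfl; simp at hn) d
    obtain ⟨s', rfl⟩ := Multiset.exists_cons_of_mem hts
    rw [Multiset.card_cons, Nat.add_right_cancel_iff] at hn
    rw [Multiset.card_cons, Multiset.sum_cons, add_comm t] at h hsign ⊢
    have hstep : |d - t| < ε := by
      have := hR (hs t hts)
      simp only [USet, Set.mem_Ioo] at this
      exact abs_lt.2 ⟨by linarith, by linarith⟩
    have hdev : |Multiset.card s' * d - s'.sum| < ε := by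
      have := abs_lt.1 h
      have := abs_lt.1 hstep
      rw [abs_lt]; push_cast at *
      constructor <;> nlinarith
    exact add_mem_ASet_succ (ih (fun u hu => hs u (Multiset.mem_cons_of_mem hu)) hdev hn)
      (hs t hts) (by exact_mod_cast h)

theorem exists_multiset_of_mem_ASet {z : ℝ} {n : ℕ} (hz : z ∈ ASet ε d R n) :
    ∃ s : Multiset ℝ, Multiset.card s = n ∧ s.sum = z ∧ ∀ t ∈ s, t ∈ R := by
  obtain ⟨x, hxR, rfl, -⟩ := mem_ASet_iff.1 hz
  refine ⟨(range n).val.map x, by simp, sum_map_val _ _, fun t ht => ?_⟩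
  obtain ⟨i, hi, rfl⟩ := Multiset.mem_map.1 ht
  exact hxR i (by simpa using hi)

theorem eventually_add_mem_ASet {x y z : ℝ} {m : ℕ} (hR : R ⊆ USet ε d)
    (hd : d ∈ R) (hx : x ∈ ASet ε d R m) (hy : y ∈ ASet ε d R m)
    (hz : z ∈ AddSubmonoid.closure {x - m * d, y - m * d}) (hzε : |z| < ε) :
    ∀ᶠ n : ℕ in atTop, n * d + z ∈ ASet ε d R n := by
  obtain ⟨p, q, rfl⟩ := (AddSubmonoid.mem_closure_pair _ _ _).1 hz
  obtain ⟨sx, hsx, rfl, hsxR⟩ := exists_multiset_of_mem_ASet hx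
  obtain ⟨sy, hsy, rfl, hsyR⟩ := exists_multiset_of_mem_ASet hy
  filter_upwards [eventually_ge_atTop ((p + q) * m)] with n hn
  set s := p • sx + q • sy + Multiset.replicate (n - (p + q) * m) d
  have hcard : Multiset.card s = n := by
    simp only [s, Multiset.card_add, Multiset.card_nsmul, Multiset.card_replicate, hsx, hsy]
    rw [← add_mul, Nat.add_sub_cancel' hn]
  have hsum : s.sum = n * d + (p • (sx.sum - m * d) + q • (sy.sum - m * d)) := by
    simp only [s, Multiset.sum_add, Multiset.sum_nsmul, Multiset.sum_replicate, nsmul_eq_mul,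
      Nat.cast_sub hn]
    push_cast; ring
  have hsR : ∀ t ∈ s, t ∈ R := by
    simp only [s, Multiset.mem_add, Multiset.mem_replicate]
    rintro t ((ht | ht) | ⟨-, rfl⟩)
    · exact hsxR t (Multiset.mem_of_mem_nsmul ht)
    · exact hsyR t (Multiset.mem_of_mem_nsmul ht)
    · exact hd
  rw [← hsum, ← hcard]
  exact Multiset.sum_mem_ASet hR hsR (by rwa [hsum, hcard, sub_add_cancel_left, abs_neg])

end ASet

theorem IsRealGcd.le_of_dvd {a b g c : ℝ} (hg : IsRealGcd a b g) (hc : 0 < c)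
    (hca : ∃ k : ℤ, a = k * c) (hcb : ∃ k : ℤ, b = k * c) : c ≤ g := by
  rcases hg with ⟨-, -, -, hmax⟩ | ⟨-, hnone⟩
  exacts [hmax c hc hca hcb, (hnone c hc hca hcb).elim]

theorem AddSubgroup.exists_mem_closure_pair_pos_lt {a b δ : ℝ} (ha : a ≠ 0) (hδ : 0 < δ)
    (hdvd : ∀ c : ℝ, 0 < c → (∃ k : ℤ, a = k * c) → (∃ k : ℤ, b = k * c) → c < δ) :
    ∃ z ∈ closure {a, b}, 0 < z ∧ z < δ ∧ z ≤ |a| := by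
  rcases (closure {a, b}).dense_or_cyclic with hdense | ⟨c, hc⟩
  · obtain ⟨z, hz, hz0, hzδ⟩ := hdense.exists_between (lt_min hδ (abs_pos.2 ha))
    exact ⟨z, hz, hz0, hzδ.trans_le (min_le_left _ _), hzδ.le.trans (min_le_right _ _)⟩
  · rw [← zmultiples_eq_closure, ← zmultiples_abs] at hc
    have hmul {w : ℝ} (hw : w ∈ ({a, b} : Set ℝ)) : ∃ k : ℤ, w = k * |c| := by
      obtain ⟨k, hk⟩ := mem_zmultiples_iff.1 (hc ▸ subset_closure hw)
      exact ⟨k, by rw [← hk, zsmul_eq_mul]⟩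
    obtain ⟨k, hk⟩ := hmul (Set.mem_insert a {b})
    have hc0 : 0 < |c| := abs_pos.2 (by rintro rfl; simp [ha] at hk)
    refine ⟨|c|, hc ▸ mem_zmultiples _, hc0, hdvd _ hc0 ⟨k, hk⟩ (hmul (by simp)), ?_⟩
    have hk1 : 1 ≤ |(k : ℝ)| := by
      exact_mod_cast Int.one_le_abs (by rintro rfl; simp [ha] at hk)
    rw [hk, abs_mul, abs_abs]
    exact le_mul_of_one_le_left hc0.le hk1

theorem AddSubmonoid.exists_mem_pos_lt_of_neg_mem {S : AddSubmonoid ℝ} {b w δ : ℝ} (hb : b ∈ S)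
    (hb0 : 0 < b) (hw : -w ∈ S) (hw0 : 0 < w) (hwδ : w < δ) : ∃ s ∈ S, 0 < s ∧ s < δ := by
  -- subtract from `b` as many copies of `w` as keep the result positive
  set k := ⌈b / w⌉₊
  have hk0 : 0 < k := Nat.ceil_pos.2 (div_pos hb0 hw0)
  have hlt : (k : ℝ) < b / w + 1 := Nat.ceil_lt_add_one (div_pos hb0 hw0).le
  have hle : b / w ≤ k := Nat.le_ceil _
  rw [div_add_one hw0.ne', lt_div_iff₀ hw0] at hlt
  rw [div_le_iff₀ hw0] at hle
  refine ⟨b + (k - 1) • -w, add_mem hb (nsmul_mem hw _), ?_, ?_⟩ <;>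
    rw [nsmul_eq_mul, Nat.cast_sub hk0] <;> push_cast <;> nlinarith

theorem AddSubmonoid.exists_mem_closure_pair_pos_lt {a b z δ : ℝ} (ha : a < 0) (hb : 0 < b)
    (hz : z ∈ AddSubgroup.closure {a, b}) (hz0 : 0 < z) (hzδ : z < δ) (hza : z ≤ -a) :
    ∃ s ∈ closure {a, b}, 0 < s ∧ s < δ := by
  suffices z ∈ closure {a, b} ∨ -z ∈ closure {a, b} by
    rcases this with hS | hS
    exacts [⟨z, hS, hz0, hzδ⟩,
      exists_mem_pos_lt_of_neg_mem (subset_closure (by simp)) hb hS hz0 hzδ]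
  obtain ⟨k, l, rfl⟩ := AddSubgroup.mem_closure_pair.1 hz
  simp only [zsmul_eq_mul] at hz0 hza
  rcases le_total 0 l with hl | hl
  · rcases le_or_gt 0 k with hk | hk
    · lift k to ℕ using hk
      lift l to ℕ using hl
      exact Or.inl ((mem_closure_pair _ _ _).2 ⟨k, l, by simp⟩)
    · -- then `k * a + l * b ≥ -a`, so the element is `-a`
      have : (k : ℝ) ≤ -1 := by exact_mod_cast Int.le_sub_one_of_lt hk
      have : (0 : ℝ) ≤ l := by exact_mod_cast hl
      have hz : (k : ℝ) * a + l * b = -a := by nlinarith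
      simp only [zsmul_eq_mul, hz, neg_neg]
      exact Or.inr (subset_closure (by simp))
  · obtain ⟨k, rfl⟩ : ∃ k' : ℕ, k = -k' := Int.exists_eq_neg_ofNat (by
      by_contra! hk
      have : (0 : ℝ) < k := by exact_mod_cast hk
      have : (l : ℝ) ≤ 0 := by exact_mod_cast hl
      nlinarith)
    obtain ⟨l, rfl⟩ := Int.exists_eq_neg_ofNat hl
    refine Or.inr ((mem_closure_pair _ _ _).2 ⟨k, l, ?_⟩)
    simp only [nsmul_eq_mul, zsmul_eq_mul]; push_cast; ring

theorem AddSubmonoid.exists_finset_epsDenseIn {S : AddSubmonoid ℝ} {a s δ : ℝ} (ha : a ∈ S)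
    (ha0 : a < 0) (hs : s ∈ S) (hs0 : 0 < s) (hsδ : s < δ) (L : ℝ) :
    ∃ Z : Finset ℝ, (∀ z ∈ Z, z ∈ S ∧ z ∈ Set.Ioo (-L) L) ∧
      EpsDenseIn (Z : Set ℝ) δ (Set.Ioo (-L) L) := by
  -- the progression `M * a + k * s` starts below `-L` and has steps shorter than `δ`
  obtain ⟨M, hM⟩ := exists_nat_ge (L / -a)
  replace hM : M * a ≤ -L := by
    have := (div_le_iff₀ (neg_pos.2 ha0)).1 hM
    linarith
  set P := (range (⌊(L - M * a) / s⌋₊ + 2)).image fun k : ℕ => M * a + k * s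
  refine ⟨P.filter (· ∈ Set.Ioo (-L) L), fun z hz => ?_, fun c hc => ?_⟩
  · obtain ⟨hz, hzL⟩ := mem_filter.1 hz
    obtain ⟨k, -, rfl⟩ := mem_image.1 hz
    exact ⟨add_mem (by simpa using nsmul_mem ha M) (by simpa using nsmul_mem hs k), hzL⟩
  obtain ⟨hcL, hcδL⟩ := (Set.Ioo_subset_Ioo_iff (by linarith)).1 hc
  have hq : 0 ≤ (c - M * a) / s := div_nonneg (by linarith) hs0.le
  set k := ⌊(c - M * a) / s⌋₊ + 1
  have hk₁ : (c - M * a) / s < k := by exact_mod_cast Nat.lt_floor_add_one _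
  have hk₂ : (k : ℝ) ≤ (c - M * a) / s + 1 := by
    push_cast [k]; linarith [Nat.floor_le hq]
  rw [div_lt_iff₀ hs0] at hk₁
  rw [← sub_le_iff_le_add, le_div_iff₀ hs0] at hk₂
  have hmem : M * a + k * s ∈ Set.Ioo c (c + δ) := ⟨by linarith, by nlinarith⟩
  have hkP : k < ⌊(L - M * a) / s⌋₊ + 2 := by
    have := Nat.floor_le_floor
      (div_le_div_of_nonneg_right (by linarith) hs0.le : (c - M * a) / s ≤ (L - M * a) / s)
    omega
  exact ⟨_, hmem, mem_filter.2 ⟨mem_image.2 ⟨k, mem_range.2 hkP, rfl⟩, hc hmem⟩⟩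

theorem epsDenseIn_USet_of_forall_add_mem {A Z : Set ℝ} {ε δ c : ℝ}
    (hZ : EpsDenseIn Z δ (Set.Ioo (-ε) ε)) (hA : ∀ z ∈ Z, c + z ∈ A) :
    EpsDenseIn A δ (USet ε c) := by
  intro t ht
  have hshift : Set.Ioo (t - c) (t - c + δ) ⊆ Set.Ioo (-ε) ε := fun w hw =>
    have := ht (show c + w ∈ Set.Ioo t (t + δ) from ⟨by linarith [hw.1], by linarith [hw.2]⟩)
    ⟨by linarith [this.1], by linarith [this.2]⟩
  obtain ⟨z, hz, hzZ⟩ := hZ (t - c) hshift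
  exact ⟨c + z, ⟨by linarith [hz.1], by linarith [hz.2]⟩, hA z hzZ⟩

theorem ASet_generating_small_gcd_general (ε δ d : ℝ) (hδ : 0 < δ)
    (R : Set ℝ) (hR : R ⊆ USet ε d) (hd : d ∈ R) (m : ℕ)
    (x y : ℝ) (hx : x ∈ ASet ε d R m) (hy : y ∈ ASet ε d R m)
    (ha : x - (m : ℝ) * d < 0) (hb : 0 < y - (m : ℝ) * d)
    (g : ℝ) (hg : IsRealGcd (x - (m : ℝ) * d) (y - (m : ℝ) * d) g) (hgδ : g < δ) :
    ∃ N : ℕ, ∀ n : ℕ, N ≤ n →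
      EpsDenseIn (ASet ε d R n) δ (USet ε ((n : ℝ) * d)) := by
  obtain ⟨z, hz, hz0, hzδ, hza⟩ := AddSubgroup.exists_mem_closure_pair_pos_lt ha.ne hδ
    fun c hc hca hcb => (hg.le_of_dvd hc hca hcb).trans_lt hgδ
  obtain ⟨s, hs, hs0, hsδ⟩ := AddSubmonoid.exists_mem_closure_pair_pos_lt ha hb hz hz0 hzδ
    (by rwa [abs_of_neg ha] at hza)
  obtain ⟨Z, hZS, hZ⟩ :=
    AddSubmonoid.exists_finset_epsDenseIn (AddSubmonoid.subset_closure (by simp)) ha hs hs0 hsδ ε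
  have hev : ∀ᶠ n : ℕ in atTop, ∀ z ∈ Z, n * d + z ∈ ASet ε d R n :=
    (eventually_all_finset Z).2 fun z hz =>
      eventually_add_mem_ASet hR hd hx hy (hZS z hz).1 (abs_lt.2 (hZS z hz).2)
  obtain ⟨N, hN⟩ := eventually_atTop.1 hev
  exact ⟨N, fun n hn => epsDenseIn_USet_of_forall_add_mem hZ (hN n hn)⟩

/-- Let `d ∈ R ⊆ U_ε(d)`, `m ≥ 1`, `x, y ∈ A_m(ε, d, R)`, `a = x − m·d`,
`b = y − m·d` with `a < 0 < b`, and suppose `δ > gcd(a, b)` where `0 < δ ≤ ε`.  Then there is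
`N` such that for all `n ≥ N` the set `A_n(ε, d, R)` is `δ`-dense in `U_ε(n·d)`. -/
theorem ASet_generating_small_gcd (ε δ d : ℝ) (hε : 0 < ε) (hδ : 0 < δ) (hδε : δ ≤ ε)
    (R : Set ℝ) (hR : R ⊆ USet ε d) (hd : d ∈ R) (m : ℕ) (hm : 1 ≤ m)
    (x y : ℝ) (hx : x ∈ ASet ε d R m) (hy : y ∈ ASet ε d R m)
    (ha : x - (m : ℝ) * d < 0) (hb : 0 < y - (m : ℝ) * d)
    (g : ℝ) (hg : IsRealGcd (x - (m : ℝ) * d) (y - (m : ℝ) * d) g) (hgδ : g < δ) :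
    ∃ N : ℕ, ∀ n : ℕ, N ≤ n →
      EpsDenseIn (ASet ε d R n) δ (USet ε ((n : ℝ) * d)) :=
  ASet_generating_small_gcd_general ε δ d hδ R hR hd m x y hx hy ha hb g hg hgδ
end

section
/- Fix υ > 0 and a strictly monotone sequence (t_m)_{m∈ℕ} of reals converging to 0 with υ + t_0 > 0. For any ε > 0, any 0 < δ ≤ ε, any d ∈ ℝ, and any R ⊆ U_ε(d) such that d ∈ R and R is tamely ε-dense in U_ε(d), there exist N ∈ ℕ and M ∈ ℕ such that for every n ≥ N the set A_n(ε, d, R) contains a subset that is M-tamely δ-dense in U_ε(n·d). -/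
/-- `𝒯_m`: the additive semigroup generated by `{υ + t₀, …, υ + t_m}`. -/
def TGen (υ : ℝ) (t : ℕ → ℝ) (m : ℕ) : Set ℝ :=
  semigroupGen {x : ℝ | ∃ i ≤ m, x = υ + t i}

/-- `𝒯_m^* = υ + 𝒯_m`. -/
def TGenStar (υ : ℝ) (t : ℕ → ℝ) (m : ℕ) : Set ℝ :=
  (fun x => υ + x) '' TGen υ t m

/-- `R ⊆ U_ε(d)` is `r`-tamely `δ`-dense in `U_ε(d)`: there is a finite
`L ⊆ U_ε(d) ∩ 𝒯_r^*` which is `δ`-dense in `U_ε(d)` and such that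
`R = (L + {t_m : m ≥ r}) ∩ U_ε(d)`. -/
def RTamelyDense (υ : ℝ) (t : ℕ → ℝ) (r : ℕ) (δ ε d : ℝ) (R : Set ℝ) : Prop :=
  ∃ L : Set ℝ, L.Finite ∧ L ⊆ USet ε d ∩ TGenStar υ t r ∧
    EpsDenseIn L δ (USet ε d) ∧
    R = {z : ℝ | ∃ l ∈ L, ∃ m ≥ r, z = l + t m} ∩ USet ε d

/-- `R` is tamely `δ`-dense in `U_ε(d)` if it is `r`-tamely `δ`-dense for some `r`. -/
def TamelyDense (υ : ℝ) (t : ℕ → ℝ) (δ ε d : ℝ) (R : Set ℝ) : Prop :=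
  ∃ r : ℕ, RTamelyDense υ t r δ ε d R

/-!
Take points `lm < d < lp` of `L` within `ε` of `d`, and `P` so large that for `m ≥ P` every
`l + t_m` with `l ∈ L` lies in `R` and `|t_m| < δ / 4`. The sets we build consist of sums of
`n` elements of `R`: one `lm + t_m`, `n - 1 - K` copies of `d`, and `K` blocks `l + τ` with
`l ∈ L`, `τ ∈ {t_P, t_(P+1)}`. Trading an `lm` for an `lp` moves such a sum by `lp - lm < 2ε`,
trading `t_P` for `t_(P+1)` moves it by a nonzero amount less than `δ / 2`; once `K` is large
these two progressions reach every point of `U_ε(n d)` up to `δ / 2`. All these sums lie in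
`𝒯*_(P+1)`, and they lie in `A_n(ε, d, R)` because reals of absolute value `< ε` whose sum has
absolute value `< ε` can be ordered so that every partial sum has absolute value `< ε`.
-/

open Set Filter
open scoped Pointwise

namespace List

theorem exists_mem_abs_sum_sub_lt {ε : ℝ} {l : List ℝ} (hne : l ≠ []) (hl : ∀ x ∈ l, |x| < ε)
    (hs : |l.sum| < ε) : ∃ x ∈ l, |l.sum - x| < ε := by
  rcases le_or_gt 0 l.sum with h | h
  · obtain ⟨x, hx, hx0 : 0 ≤ x⟩ :=
      l.exists_le_of_sum_le hne (fun _ ↦ (0 : ℝ)) id (by simpa using h)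
    have := abs_lt.1 (hl x hx)
    exact ⟨x, hx, abs_lt.2 ⟨by linarith, by linarith [(abs_lt.1 hs).2]⟩⟩
  · obtain ⟨x, hx, hx0 : x ≤ 0⟩ :=
      l.exists_le_of_sum_le hne id (fun _ ↦ (0 : ℝ)) (by simpa using h.le)
    have := abs_lt.1 (hl x hx)
    exact ⟨x, hx, abs_lt.2 ⟨by linarith [(abs_lt.1 hs).1], by linarith⟩⟩

/- One-dimensional Steinitz lemma: put last an element with the sign of the total sum, and
reorder the rest recursively. -/
theorem exists_perm_forall_abs_sum_take_lt {ε : ℝ} (l : List ℝ) (hl : ∀ x ∈ l, |x| < ε)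
    (hs : |l.sum| < ε) : ∃ l' : List ℝ, l'.Perm l ∧ ∀ k, |(l'.take k).sum| < ε := by
  rcases eq_or_ne l [] with rfl | hne
  · exact ⟨[], .nil, by simpa using hs⟩
  obtain ⟨x, hx, hsx⟩ := exists_mem_abs_sum_sub_lt hne hl hs
  have hlen : (l.erase x).length < l.length := by
    rw [length_erase_of_mem hx]; exact Nat.pred_lt (length_pos_iff.2 hne).ne'
  obtain ⟨l', hperm, htake⟩ := exists_perm_forall_abs_sum_take_lt (l.erase x)
    (fun y hy ↦ hl y (mem_of_mem_erase hy)) (by rwa [← sum_erase hx, add_sub_cancel_left] at hsx)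
  have hperm' : (l' ++ [x]).Perm l :=
    (perm_append_singleton x l').trans ((hperm.cons x).trans (perm_cons_erase hx).symm)
  refine ⟨l' ++ [x], hperm', fun k ↦ ?_⟩
  rcases le_or_gt k l'.length with hk | hk
  · rw [take_append_of_le_length hk]; exact htake k
  · rw [take_of_length_le (by simp; omega), hperm'.sum_eq]; exact hs
termination_by l.length

theorem sum_take_eq_sum_range_getD {M : Type*} [AddCommMonoid M] (l : List M) {r : ℕ}
    (hr : r ≤ l.length) : (l.take r).sum = ∑ i ∈ Finset.range r, l.getD i 0 := by
  induction r with
  | zero => simp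
  | succ r ih =>
    rw [sum_take_succ _ _ hr, ih (by omega), Finset.sum_range_succ, getD_eq_getElem]

end List

theorem Set.Finite.nsmul {α : Type*} [AddMonoid α] {s : Set α} (hs : s.Finite) :
    ∀ n : ℕ, (n • s).Finite
  | 0 => by rw [zero_nsmul]; exact finite_zero
  | n + 1 => by rw [succ_nsmul]; exact (hs.nsmul n).add hs

theorem nsmul_inter_USet_subset_ASet {ε d : ℝ} {R : Set ℝ} (hR : R ⊆ USet ε d) (n : ℕ) :
    n • R ∩ USet ε (n * d) ⊆ ASet ε d R n := by
  rintro z ⟨hz, hzU⟩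
  obtain ⟨f, hfR, rfl⟩ := mem_nsmul_iff_sum.1 hz
  have hdev : ∀ i, |d - f i| < ε := fun i ↦ by
    have := hR (hfR i); simp only [USet, mem_Ioo] at this; exact abs_lt.2 ⟨by linarith, by linarith⟩
  have hsum : (List.ofFn fun i ↦ d - f i).sum = n * d - ∑ i, f i := by
    simp [List.sum_ofFn, Finset.sum_sub_distrib]
  obtain ⟨D, hD, hpart⟩ := (List.ofFn fun i ↦ d - f i).exists_perm_forall_abs_sum_take_lt
    (by simpa [List.mem_ofFn] using hdev) (by
      rw [hsum, abs_lt]; simp only [USet, mem_Ioo] at hzU; constructor <;> linarith)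
  have hlen : D.length = n := by simp [hD.length_eq]
  have hpart' : ∀ r ≤ n, ∑ i ∈ Finset.range r, (d - (d - D.getD i 0)) = (D.take r).sum := by
    intro r hr; simp only [sub_sub_cancel]; exact (D.sum_take_eq_sum_range_getD (hlen ▸ hr)).symm
  refine ⟨by simpa using hzU, fun i ↦ d - D.getD i 0, fun i hi ↦ ?_, ?_, fun r hr ↦ ?_⟩
  · obtain ⟨j, hj⟩ := List.mem_ofFn.1 (hD.subset (D.getElem_mem (hlen ▸ hi)))
    show d - D.getD i 0 ∈ R
    rw [List.getD_eq_getElem _ _ (hlen ▸ hi), ← hj, sub_sub_cancel]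
    exact hfR j
  · have := hpart' n le_rfl
    rw [List.take_of_length_le hlen.le, hD.sum_eq, hsum, Finset.sum_sub_distrib] at this
    simp only [Finset.sum_const, Finset.card_range, nsmul_eq_mul] at this
    linarith
  · rw [hpart' r hr]; exact hpart r

theorem semigroupGen_mono {S T : Set ℝ} (h : S ⊆ T) : semigroupGen S ⊆ semigroupGen T :=
  fun _ ⟨l, hne, hl, hsum⟩ ↦ ⟨l, hne, fun s hs ↦ h (hl s hs), hsum⟩

theorem subset_semigroupGen (S : Set ℝ) : S ⊆ semigroupGen S :=
  fun x hx ↦ ⟨[x], List.cons_ne_nil x [], by simpa using hx, List.sum_singleton⟩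

theorem semigroupGen_add_subset (S : Set ℝ) :
    semigroupGen S + semigroupGen S ⊆ semigroupGen S := by
  rintro _ ⟨_, ⟨l₁, hne, hl₁, rfl⟩, _, ⟨l₂, -, hl₂, rfl⟩, rfl⟩
  refine ⟨l₁ ++ l₂, by simp [hne], fun s hs ↦ ?_, List.sum_append⟩
  rcases List.mem_append.1 hs with hs | hs
  exacts [hl₁ s hs, hl₂ s hs]

section Tame

variable {υ : ℝ} {t : ℕ → ℝ}

theorem TGen_mono {r M : ℕ} (h : r ≤ M) : TGen υ t r ⊆ TGen υ t M :=
  semigroupGen_mono fun _ ⟨i, hi, hx⟩ ↦ ⟨i, hi.trans h, hx⟩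

theorem TGenStar_mono {r M : ℕ} (h : r ≤ M) : TGenStar υ t r ⊆ TGenStar υ t M :=
  image_mono (TGen_mono h)

theorem add_mem_TGen_of_mem_TGenStar {r M m : ℕ} {l : ℝ} (hl : l ∈ TGenStar υ t r)
    (hr : r ≤ M) (hm : m ≤ M) : l + t m ∈ TGen υ t M := by
  obtain ⟨σ, hσ, rfl⟩ := hl
  rw [add_right_comm]
  exact semigroupGen_add_subset _
    (add_mem_add (subset_semigroupGen _ ⟨m, hm, rfl⟩) (TGen_mono hr hσ))

theorem TGenStar_add_nsmul_subset (M : ℕ) :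
    ∀ k : ℕ, TGenStar υ t M + k • TGen υ t M ⊆ TGenStar υ t M
  | 0 => by rw [zero_nsmul, add_zero]
  | k + 1 => by
    rw [succ_nsmul, ← add_assoc]
    rintro _ ⟨_, hx, y, hy, rfl⟩
    obtain ⟨σ, hσ, rfl⟩ := TGenStar_add_nsmul_subset M k hx
    exact ⟨σ + y, semigroupGen_add_subset _ (add_mem_add hσ hy), (add_assoc υ σ y).symm⟩

end Tame

theorem exists_nat_le_add_mul_mem_Ioc {c Δ x : ℝ} {K : ℕ} (hΔ : 0 < Δ) (hc : c ≤ x)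
    (hx : x ≤ c + K * Δ) : ∃ a ≤ K, c + a * Δ ∈ Ioc (x - Δ) x := by
  have hq : 0 ≤ (x - c) / Δ := div_nonneg (sub_nonneg.2 hc) hΔ.le
  refine ⟨⌊(x - c) / Δ⌋₊, Nat.floor_le_of_le ((div_le_iff₀ hΔ).2 (by linarith)), ?_, ?_⟩
  · have := Nat.lt_floor_add_one ((x - c) / Δ)
    rw [div_lt_iff₀ hΔ] at this
    linarith
  · have := Nat.floor_le hq
    rw [le_div_iff₀ hΔ] at this
    linarith

theorem exists_nat_le_add_mul_add_mul_mem_Ioc {c Δ₁ Δ₂ x : ℝ} {K : ℕ} (hΔ₁ : 0 < Δ₁)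
    (hΔ₂ : 0 < Δ₂) (hΔ : Δ₁ ≤ K * Δ₂) (hc : c ≤ x) (hx : x ≤ c + K * Δ₁) :
    ∃ a ≤ K, ∃ i ≤ K, c + a * Δ₁ + i * Δ₂ ∈ Ioc (x - Δ₂) x := by
  obtain ⟨a, ha, hlo, hhi⟩ := exists_nat_le_add_mul_mem_Ioc hΔ₁ hc hx
  obtain ⟨i, hi, h⟩ := exists_nat_le_add_mul_mem_Ioc (K := K) hΔ₂ hhi (by linarith)
  exact ⟨a, ha, i, hi, h⟩

theorem eventually_le_add_natCast_mul (a b : ℝ) {s : ℝ} (hs : 0 < s) :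
    ∀ᶠ K : ℕ in atTop, b ≤ a + K * s :=
  (tendsto_atTop_add_const_left _ a
    (tendsto_natCast_atTop_atTop.atTop_mul_const hs)).eventually_ge_atTop b

theorem nsmul_add_nsmul_mem_nsmul {α : Type*} [AddMonoid α] {S : Set α} {x y : α} {a K : ℕ}
    (hx : x ∈ S) (hy : y ∈ S) (ha : a ≤ K) : a • x + (K - a) • y ∈ K • S := by
  rw [← Nat.add_sub_cancel' ha, add_nsmul, Nat.add_sub_cancel_left]
  exact add_mem_add (nsmul_mem_nsmul hx) (nsmul_mem_nsmul hy)

theorem add_image_subset {t : ℕ → ℝ} {C U : Set ℝ} {S : Set ℕ}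
    (h : ∀ m ∈ S, ∀ x ∈ C, x + t m ∈ U) : C + t '' S ⊆ U := by
  rintro _ ⟨x, hx, _, ⟨m, hm, rfl⟩, rfl⟩
  exact h m hm x hx

def blockSums (C T : Set ℝ) (c d : ℝ) (K n : ℕ) : Set ℝ :=
  {c} + ((n - 1 - K) • {d} + K • (C + T))

theorem blockSums_finite {C T : Set ℝ} (hC : C.Finite) (hT : T.Finite) (c d : ℝ) (K n : ℕ) :
    (blockSums C T c d K n).Finite :=
  (finite_singleton c).add (((finite_singleton d).nsmul _).add ((hC.add hT).nsmul K))

theorem blockSums_subset_TGenStar {υ : ℝ} {t : ℕ → ℝ} {r M K n : ℕ} {L T : Set ℝ} {c d : ℝ}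
    (hL : L ⊆ TGenStar υ t r) (hr : r ≤ M) (hc : c ∈ L) (hd : d ∈ L + t '' Iic M)
    (hT : T ⊆ t '' Iic M) : blockSums L T c d K n ⊆ TGenStar υ t M := by
  have hLT : L + t '' Iic M ⊆ TGen υ t M :=
    add_image_subset fun _ hm _ hx ↦ add_mem_TGen_of_mem_TGenStar (hL hx) hr hm
  calc blockSums L T c d K n ⊆ TGenStar υ t M + ((n - 1 - K) • TGen υ t M + K • TGen υ t M) :=
        add_subset_add (singleton_subset_iff.2 (TGenStar_mono hr (hL hc))) (add_subset_add
          (nsmul_subset_nsmul_left (singleton_subset_iff.2 (hLT hd)))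
          (nsmul_subset_nsmul_left ((add_subset_add_left hT).trans hLT)))
    _ ⊆ TGenStar υ t M := by rw [← add_nsmul]; exact TGenStar_add_nsmul_subset M _

theorem blockSums_add_subset_nsmul {R C T : Set ℝ} {c d τ : ℝ} {K n : ℕ} (hc : c + τ ∈ R)
    (hd : d ∈ R) (hCT : C + T ⊆ R) (hn : K + 1 ≤ n) : blockSums C T c d K n + {τ} ⊆ n • R :=
  calc blockSums C T c d K n + {τ} = {c + τ} + ((n - 1 - K) • {d} + K • (C + T)) := by
        rw [blockSums, add_right_comm, singleton_add_singleton]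
    _ ⊆ R + ((n - 1 - K) • R + K • R) :=
        add_subset_add (singleton_subset_iff.2 hc) (add_subset_add
          (nsmul_subset_nsmul_left (singleton_subset_iff.2 hd)) (nsmul_subset_nsmul_left hCT))
    _ = n • R := by rw [← add_nsmul, ← succ_nsmul', show n - 1 - K + K + 1 = n by omega]

theorem epsDenseIn_blockSums {ε δ d lp lm τ₀ τ₁ : ℝ} {C T : Set ℝ} {K n : ℕ}
    (hlp : lp ∈ C) (hlm : lm ∈ C) (hτ₀ : τ₀ ∈ T) (hτ₁ : τ₁ ∈ T) (hlmp : lm < lp)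
    (hτ : τ₀ < τ₁) (hτδ : τ₁ - τ₀ ≤ δ / 2) (hlow : ε ≤ (d - lm) + K * (d - lm - τ₀))
    (hup : ε ≤ -(d - lm) + K * (lp - d + τ₀)) (hstep : lp - lm ≤ K * (τ₁ - τ₀))
    (hn : K + 1 ≤ n) :
    EpsDenseIn (blockSums C T lm d K n ∩ USet ε (n * d)) δ (USet ε (n * d)) := by
  intro u hu
  obtain ⟨hu₁, hu₂⟩ := (Ioo_subset_Ioo_iff (by linarith)).1 hu
  set c := lm + (n - 1 - K) * d + K * lm + K * τ₀
  have hc : c - n * d = -(d - lm) - K * (d - lm - τ₀) := by ring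
  have hcK : c + K * (lp - lm) - n * d = -(d - lm) + K * (lp - d + τ₀) := by ring
  obtain ⟨a, ha, i, hi, hlo, hhi⟩ :=
    exists_nat_le_add_mul_add_mul_mem_Ioc (c := c) (x := u + δ / 2) (sub_pos.2 hlmp)
      (sub_pos.2 hτ) hstep (by linarith) (by linarith)
  set v := lm + ((n - 1 - K) • d + ((a • lp + (K - a) • lm) + (i • τ₁ + (K - i) • τ₀)))
  have hv : v = c + a * (lp - lm) + i * (τ₁ - τ₀) := by
    simp only [v, c, nsmul_eq_mul, Nat.sub_sub, Nat.cast_sub ha, Nat.cast_sub hi,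
      Nat.cast_sub (show 1 + K ≤ n by omega)]
    push_cast; ring
  have hvu : v ∈ Ioo u (u + δ) := by rw [hv]; constructor <;> linarith
  refine ⟨v, hvu, add_mem_add rfl (add_mem_add (nsmul_mem_nsmul rfl) ?_), hu hvu⟩
  rw [nsmul_add]
  exact add_mem_add (nsmul_add_nsmul_mem_nsmul hlp hlm ha) (nsmul_add_nsmul_mem_nsmul hτ₁ hτ₀ hi)

theorem exists_nat_epsDenseIn_blockSums {ε δ d lp lm τ₀ τ₁ : ℝ} {C T : Set ℝ}
    (hlp : lp ∈ C) (hlm : lm ∈ C) (hτ₀ : τ₀ ∈ T) (hτ₁ : τ₁ ∈ T) (hlmp : lm < lp)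
    (hτ : τ₀ < τ₁) (hτδ : τ₁ - τ₀ ≤ δ / 2) (h₀ : τ₀ ∈ Ioo (d - lp) (d - lm)) :
    ∃ K : ℕ, ∀ n, K + 1 ≤ n →
      EpsDenseIn (blockSums C T lm d K n ∩ USet ε (n * d)) δ (USet ε (n * d)) := by
  obtain ⟨K, hlow, hup, hstep⟩ :=
    ((eventually_le_add_natCast_mul (d - lm) ε (s := d - lm - τ₀) (by linarith [h₀.2])).and <|
    (eventually_le_add_natCast_mul (-(d - lm)) ε (s := lp - d + τ₀) (by linarith [h₀.1])).and <|
      eventually_le_add_natCast_mul 0 (lp - lm) (sub_pos.2 hτ)).exists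
  exact ⟨K, fun n ↦
    epsDenseIn_blockSums hlp hlm hτ₀ hτ₁ hlmp hτ hτδ hlow hup (by simpa using hstep)⟩

theorem exists_lt_mem_image_Icc_succ {t : ℕ → ℝ} (ht : Function.Injective t) (P : ℕ) :
    ∃ τ₀ ∈ t '' Icc P (P + 1), ∃ τ₁ ∈ t '' Icc P (P + 1), τ₀ < τ₁ :=
  Nontrivial.exists_lt ⟨_, mem_image_of_mem t (left_mem_Icc.2 P.le_succ), _,
    mem_image_of_mem t (right_mem_Icc.2 P.le_succ), ht.ne P.succ_ne_self.symm⟩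

theorem eventually_forall_add_mem {t : ℕ → ℝ} (hlim : Tendsto t atTop (nhds 0)) {ε d : ℝ}
    {r : ℕ} {L R : Set ℝ} (hL : L.Finite) (hLU : L ⊆ USet ε d)
    (hR : R = {z | ∃ l ∈ L, ∃ m ≥ r, z = l + t m} ∩ USet ε d) :
    ∀ᶠ m in atTop, ∀ x ∈ L, x + t m ∈ R := by
  refine (eventually_all_finite hL).2 fun x hx ↦ ?_
  have hlim' : Tendsto (fun m ↦ x + t m) atTop (nhds x) := by
    simpa using (tendsto_const_nhds (x := x)).add hlim
  filter_upwards [eventually_ge_atTop r, hlim'.eventually_mem (isOpen_Ioo.mem_nhds (hLU hx))]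
    with m hm hU
  exact hR ▸ ⟨⟨x, hx, m, hm, rfl⟩, hU⟩

theorem delta_density_constant_general (υ : ℝ) (t : ℕ → ℝ)
    (hmono : StrictMono t ∨ StrictAnti t)
    (hlim : Filter.Tendsto t Filter.atTop (nhds 0))
    (ε δ d : ℝ) (hε : 0 < ε) (hδ : 0 < δ)
    (R : Set ℝ) (hR : R ⊆ USet ε d) (hd : d ∈ R)
    (htame : TamelyDense υ t ε ε d R) :
    ∃ N M : ℕ, ∀ n : ℕ, N ≤ n →
      ∃ R' : Set ℝ, R' ⊆ ASet ε d R n ∧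
        RTamelyDense υ t M δ ε ((n : ℝ) * d) R' := by
  obtain ⟨r, L, hLfin, hLT, hLdense, hReq⟩ := htame
  obtain ⟨⟨l₀, hl₀, m₀, -, hdl⟩, -⟩ := hReq ▸ hd
  obtain ⟨lp, ⟨hdlp, hlpd⟩, hlp⟩ := hLdense d (Ioo_subset_Ioo (by linarith) le_rfl)
  obtain ⟨lm, ⟨hlmd, hdlm⟩, hlm⟩ := hLdense (d - ε) (Ioo_subset_Ioo le_rfl (by linarith))
  obtain ⟨P, hP⟩ := eventually_atTop.1 <| (eventually_ge_atTop (max r m₀)).and <|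
    (eventually_forall_add_mem hlim hLfin (fun x hx ↦ (hLT hx).1) hReq).and <|
    hlim.eventually_mem <| show Ioo (d - lp) (d - lm) ∩ Ioo (-(δ / 4)) (δ / 4) ∈ nhds 0 from
      inter_mem (Ioo_mem_nhds (by linarith) (by linarith))
        (Ioo_mem_nhds (by linarith) (by linarith))
  have hPr : max r m₀ ≤ P + 1 := (hP P le_rfl).1.trans P.le_succ
  obtain ⟨τ₀, hτ₀, τ₁, hτ₁, hτ⟩ :=
    exists_lt_mem_image_Icc_succ (hmono.elim StrictMono.injective StrictAnti.injective) P
  have hsmall : t '' Icc P (P + 1) ⊆ Ioo (d - lp) (d - lm) ∩ Ioo (-(δ / 4)) (δ / 4) :=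
    image_subset_iff.2 fun m hm ↦ (hP m hm.1).2.2
  obtain ⟨K, hK⟩ := exists_nat_epsDenseIn_blockSums (ε := ε) (δ := δ) hlp hlm hτ₀ hτ₁
    (by linarith) hτ (by linarith [(hsmall hτ₀).2.1, (hsmall hτ₁).2.2]) (hsmall hτ₀).1
  refine ⟨K + 1, P + 1, fun n hn ↦ ⟨_, ?_, blockSums L _ lm d K n ∩ USet ε (n * d),
    (blockSums_finite hLfin ((finite_Icc P (P + 1)).image t) lm d K n).inter_of_left _,
    fun v hv ↦ ⟨hv.2, blockSums_subset_TGenStar (fun x hx ↦ (hLT hx).2) (le_of_max_le_left hPr)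
      hlm (hdl ▸ add_mem_add hl₀ (mem_image_of_mem t (le_of_max_le_right hPr)))
      (image_mono Icc_subset_Iic_self) hv.1⟩, hK n hn, rfl⟩⟩
  rintro _ ⟨⟨v, hv, m, hm, rfl⟩, hzU⟩
  have hLT : L + t '' Icc P (P + 1) ⊆ R := add_image_subset fun m hm ↦ (hP m hm.1).2.1
  exact nsmul_inter_USet_subset_ASet hR n ⟨blockSums_add_subset_nsmul
    ((hP m (by omega)).2.1 lm hlm) hd hLT hn (add_mem_add hv.1 rfl), hzU⟩

/-- Fix `υ > 0` and a strictly monotone sequence `t_m → 0` with `υ + t₀ > 0`.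
For any `ε > 0`, `0 < δ ≤ ε`, `d`, and `R ⊆ U_ε(d)` with `d ∈ R` and `R` tamely `ε`-dense in
`U_ε(d)`, there are `N, M ∈ ℕ` such that for every `n ≥ N` the set `A_n(ε, d, R)` contains a
subset which is `M`-tamely `δ`-dense in `U_ε(n·d)`. -/
theorem delta_density_constant (υ : ℝ) (hυ : 0 < υ) (t : ℕ → ℝ)
    (hmono : StrictMono t ∨ StrictAnti t)
    (hlim : Filter.Tendsto t Filter.atTop (nhds 0)) (ht0 : 0 < υ + t 0)
    (ε δ d : ℝ) (hε : 0 < ε) (hδ : 0 < δ) (hδε : δ ≤ ε)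
    (R : Set ℝ) (hR : R ⊆ USet ε d) (hd : d ∈ R)
    (htame : TamelyDense υ t ε ε d R) :
    ∃ N M : ℕ, ∀ n : ℕ, N ≤ n →
      ∃ R' : Set ℝ, R' ⊆ ASet ε d R n ∧
        RTamelyDense υ t M δ ε ((n : ℝ) * d) R' :=
  delta_density_constant_general υ t hmono hlim ε δ d hε hδ R hR hd htame
end

section
/- Let S ⊆ ℝ^{>0} be nonempty and let λ > 0 be such that the subgroup ⟨S⟩ of (ℝ, +) generated by S equals λℤ. Then there exists N ∈ ℕ such that nλ ∈ 𝒯(S) for every integer n ≥ N. -/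
lemma mem_semigroupGen_of_mem_closure {S : Set ℝ} {x : ℝ} (hx : x ∈ AddSubmonoid.closure S)
    (hx0 : x ≠ 0) : x ∈ semigroupGen S := by
  obtain ⟨l, hlS, rfl⟩ := AddSubmonoid.exists_list_of_mem_closure hx
  exact ⟨l, by rintro rfl; exact hx0 List.sum_nil, hlS, rfl⟩

lemma exists_nsmul_eq_of_mem_zmultiples {x lam : ℝ} (hlam : 0 < lam) (hx : 0 < x)
    (hmem : x ∈ AddSubgroup.zmultiples lam) : ∃ n : ℕ, n • lam = x := by
  obtain ⟨z, rfl⟩ := AddSubgroup.mem_zmultiples_iff.mp hmem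
  have hz : 0 < z := by
    rw [zsmul_eq_mul] at hx
    exact_mod_cast pos_of_mul_pos_left hx hlam.le
  exact ⟨z.toNat, by rw [← natCast_zsmul, Int.toNat_of_nonneg hz.le]⟩

lemma setGcd_preimage_multiplesHom_eq_one {S : Set ℝ} {lam : ℝ} (hlam : lam ≠ 0)
    (hS : S ⊆ Set.range (multiplesHom ℝ lam)) (hgen : lam ∈ AddSubgroup.closure S) :
    Nat.setGcd (multiplesHom ℝ lam ⁻¹' S) = 1 := by
  set d := Nat.setGcd (multiplesHom ℝ lam ⁻¹' S)
  have hS_le : AddSubgroup.closure S ≤ AddSubgroup.zmultiples (d • lam) := by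
    rw [AddSubgroup.closure_le]
    rintro _ hx
    obtain ⟨n, rfl⟩ := hS hx
    obtain ⟨c, rfl⟩ : d ∣ n := Nat.setGcd_dvd_of_mem hx
    exact AddSubgroup.mem_zmultiples_iff.mpr
      ⟨c, by rw [natCast_zsmul, multiplesHom_apply, mul_nsmul]⟩
  obtain ⟨z, hz⟩ := AddSubgroup.mem_zmultiples_iff.mp (hS_le hgen)
  have hzd : z * d = 1 := by
    rw [← natCast_zsmul, smul_smul] at hz
    exact_mod_cast smul_left_injective ℤ hlam (hz.trans (one_zsmul lam).symm)
  exact_mod_cast Int.eq_one_of_mul_eq_one_left (Int.natCast_nonneg d) hzd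

theorem multiples_eventually_in_semigroup_general (S : Set ℝ)
    (hpos : S ⊆ Set.Ioi (0 : ℝ)) (lam : ℝ) (hlam : 0 < lam)
    (hgen : AddSubgroup.closure S = AddSubgroup.zmultiples lam) :
    ∃ N : ℕ, ∀ n : ℕ, N ≤ n → (n : ℝ) * lam ∈ semigroupGen S := by
  have hS : S ⊆ Set.range (multiplesHom ℝ lam) := fun x hx =>
    exists_nsmul_eq_of_mem_zmultiples hlam (hpos hx) (hgen ▸ AddSubgroup.subset_closure hx)
  have hgcd := setGcd_preimage_multiplesHom_eq_one hlam.ne' hS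
    (hgen ▸ AddSubgroup.mem_zmultiples lam)
  obtain ⟨N, hN⟩ := Nat.exists_mem_closure_of_ge (multiplesHom ℝ lam ⁻¹' S)
  refine ⟨N + 1, fun n hn => mem_semigroupGen_of_mem_closure ?_
    (mul_ne_zero (Nat.cast_ne_zero.mpr (by omega)) hlam.ne')⟩
  have hn_mem := hN n (by omega) (hgcd ▸ one_dvd n)
  simpa using AddMonoidHom.mclosure_preimage_le _ _ hn_mem

/-- If `S` is a nonempty set of positive reals with `⟨S⟩ = λℤ`, `λ > 0`,
then there is `N ∈ ℕ` such that `nλ ∈ 𝒯(S)` for all `n ≥ N`. -/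
theorem multiples_eventually_in_semigroup (S : Set ℝ) (hne : S.Nonempty)
    (hpos : S ⊆ Set.Ioi (0 : ℝ)) (lam : ℝ) (hlam : 0 < lam)
    (hgen : AddSubgroup.closure S = AddSubgroup.zmultiples lam) :
    ∃ N : ℕ, ∀ n : ℕ, N ≤ n → (n : ℝ) * lam ∈ semigroupGen S :=
  multiples_eventually_in_semigroup_general S hpos lam hlam hgen
end

section
/- Let T ⊆ ℝ be a nonempty countable set that is asymptotically dense in ℝ. Then there exists a Borel function ξ : ℝ^{>0} → ℝ such that x + ξ(x) ∈ T for every x > 0 and ξ(x) → 0 as x → +∞. -/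
/-!
Enumerate `T = {e 0, e 1, …}` and send `x` to `e n` for the least `n` with
`dist x (e n) < infDist x T + exp (-x)`. Each condition on `n` is a Borel condition on `x`, so
this least index, and hence the selection, is Borel. Asymptotic density makes `infDist x T → 0`,
so the correction `e n - x` tends to `0`.
-/

open Filter Metric Topology

theorem AsympDense.tendsto_infDist {T : Set ℝ} (hT : AsympDense T) :
    Tendsto (fun x => infDist x T) atTop (𝓝 0) := by
  rw [Metric.tendsto_nhds]
  intro ε hε
  obtain ⟨K, -, hK⟩ := hT ε hε
  filter_upwards [eventually_ge_atTop (K + ε)] with x hx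
  have hsub : Set.Ioo (x - ε) (x - ε + ε) ⊆ Set.Ici K := fun y hy => by
    simp only [Set.mem_Ioo, Set.mem_Ici] at hy ⊢
    linarith [hy.1]
  obtain ⟨t, ⟨htl, htr⟩, htT⟩ := hK (x - ε) hsub
  have hdist : dist x t < ε := by
    rw [Real.dist_eq, abs_lt]
    constructor <;> linarith
  rw [Real.dist_eq, sub_zero, abs_of_nonneg infDist_nonneg]
  exact (infDist_le_dist_of_mem htT).trans_lt hdist

theorem Set.Countable.exists_measurable_mem_dist_lt {X : Type*} [PseudoMetricSpace X]
    [MeasurableSpace X] [OpensMeasurableSpace X] {T : Set X} (hne : T.Nonempty)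
    (hcount : T.Countable) {r : X → ℝ} (hr : Measurable r) (hlt : ∀ x, infDist x T < r x) :
    ∃ f : X → X, Measurable f ∧ (∀ x, f x ∈ T) ∧ ∀ x, dist x (f x) < r x := by
  classical
  obtain ⟨e, rfl⟩ := hcount.exists_eq_range hne
  have hex : ∀ x, ∃ n, dist x (e n) < r x := fun x => by
    obtain ⟨_, ⟨n, rfl⟩, hn⟩ := (infDist_lt_iff hne).1 (hlt x)
    exact ⟨n, hn⟩
  have hfind : Measurable fun x => Nat.find (hex x) :=
    measurable_find hex fun n =>
      measurableSet_lt (continuous_id.dist continuous_const).measurable hr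
  exact ⟨fun x => e (Nat.find (hex x)), measurable_from_top.comp hfind,
    fun x => Set.mem_range_self _, fun x => Nat.find_spec (hex x)⟩

/-- If `T` is a nonempty countable asymptotically dense subset of `ℝ`, then
there is a Borel function `ξ : ℝ^{>0} → ℝ` with `x + ξ(x) ∈ T` for all `x > 0` and
`ξ(x) → 0` as `x → +∞`. -/
theorem exists_borel_correction (T : Set ℝ) (hne : T.Nonempty) (hcount : T.Countable)
    (hdense : AsympDense T) :
    ∃ ξ : ℝ → ℝ, Measurable ξ ∧ (∀ x : ℝ, 0 < x → x + ξ x ∈ T) ∧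
      Filter.Tendsto ξ Filter.atTop (nhds 0) := by
  set r : ℝ → ℝ := fun x => infDist x T + Real.exp (-x)
  have hr : Measurable r :=
    ((continuous_infDist_pt T).add (Real.continuous_exp.comp continuous_neg)).measurable
  obtain ⟨f, hf, hfT, hfr⟩ := hcount.exists_measurable_mem_dist_lt hne hr
    fun x => lt_add_of_pos_right _ (Real.exp_pos _)
  have hr0 : Tendsto r atTop (𝓝 0) := by
    simpa using hdense.tendsto_infDist.add Real.tendsto_exp_neg_atTop_nhds_zero
  refine ⟨fun x => f x - x, hf.sub measurable_id, fun x _ => by simpa using hfT x, ?_⟩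
  refine squeeze_zero_norm (fun x => ?_) hr0
  rw [Real.norm_eq_abs, ← Real.dist_eq, dist_comm]
  exact (hfr x).le
end
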